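/- arXiv:2306.03638 — 4 statements merged into one kernel-verified Lean document; each statement's English description precedes it below -/
import Mathlib

section
/- Let H be a real finite-dimensional inner product space, let l : H → ℝ be μ-strongly convex and M-smooth with minimizer w̄, and let h : H → ℝ ∪ {+∞} be proper, closed and convex, with w* the minimizer of l + h. Let (w^t) be generated by Prox-SGD with constant stepsize γ ∈ (0, min{μ/(2a), 1/μ}], where conditionally on w^t the estimator g^t is a quadratically bounded estimator for ∇l at w^t with parameters (a, b, w*). Then for every T ≥ 0, E‖w^{T+1} − w*‖² ≤ (1 − γμ)^T ‖w⁰ − w*‖² + (2γ/μ)(b + M²‖w* − w̄‖²). -/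
/-!
Write `G = ∇l(w*)`. The optimality of `w*` for `l + h` says `w* = prox_{γh}(w* - γG)`, and the
prox of a convex function is nonexpansive, so pathwise
`‖w^{t+1} - w*‖ ≤ ‖(w^t - w*) - γ(g^t - G)‖`. Expanding the square and taking expectations,
unbiasedness turns the cross term into `E⟪w^t - w*, ∇l(w^t) - G⟫ ≥ μ E‖w^t - w*‖²` (strong
monotonicity of `∇l`), while `E‖g^t - G‖² ≤ 2(a E‖w^t - w*‖² + b) + 2M²‖w* - w̄‖²` since
`∇l(w̄) = 0`. With `2aγ ≤ μ` this gives `X_{t+1} ≤ (1 - γμ) X_t + 2γ²(b + M²‖w* - w̄‖²)`, which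
unrolls to the bound since `γμ ≤ 1`.
-/

open MeasureTheory Filter Topology Set

section FirstOrder

variable {E : Type*} [NormedAddCommGroup E] [NormedSpace ℝ E] {f φ : E → ℝ}
  {f' : E →L[ℝ] ℝ} {s : Set E} {x y : E}

theorem HasFDerivAt.apply_le_of_forall_sub_le {d : E} {k : ℝ} (hf : HasFDerivAt f f' x)
    (h : ∀ t ∈ Ioc (0 : ℝ) 1, f (x + t • d) - f x ≤ t * k) : f' d ≤ k := by
  have hline : HasDerivAt (fun t : ℝ => f (x + t • d)) (f' d) 0 := by
    have hf0 : HasFDerivAt f f' (x + (0 : ℝ) • d) := by rwa [zero_smul, add_zero]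
    have hd : HasDerivAt (fun t : ℝ => x + t • d) d 0 := by
      simpa using ((hasDerivAt_id (0 : ℝ)).smul_const d).const_add x
    exact hf0.comp_hasDerivAt (0 : ℝ) hd
  have hslope : Tendsto (slope (fun t : ℝ => f (x + t • d)) 0) (𝓝[>] 0) (𝓝 (f' d)) :=
    (hasDerivAt_iff_tendsto_slope.mp hline).mono_left (nhdsWithin_mono _ fun _ ht => ne_of_gt ht)
  refine le_of_tendsto hslope ?_
  filter_upwards [Ioc_mem_nhdsGT (zero_lt_one' ℝ)] with t ht
  rw [slope_def_field, sub_zero, zero_smul, add_zero, div_le_iff₀ ht.1, mul_comm]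
  exact h t ht

theorem ConvexOn.hasFDerivAt_apply_sub_le (hf : ConvexOn ℝ s f) (hx : x ∈ s) (hy : y ∈ s)
    (hd : HasFDerivAt f f' x) : f' (y - x) ≤ f y - f x := by
  refine hd.apply_le_of_forall_sub_le fun t ht => ?_
  have hcomb : x + t • (y - x) = (1 - t) • x + t • y := by module
  have := hf.2 hx hy (sub_nonneg.2 ht.2) ht.1.le (by ring)
  rw [hcomb]
  simp only [smul_eq_mul] at this
  linarith

theorem ConvexOn.sub_le_of_isMinOn_add (hφ : ConvexOn ℝ s φ) (hx : x ∈ s) (hy : y ∈ s)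
    (hf : HasFDerivAt f f' x) (hmin : IsMinOn (fun v => φ v + f v) s x) :
    φ x - φ y ≤ f' (y - x) := by
  suffices -f' (y - x) ≤ φ y - φ x by linarith
  refine hf.neg.apply_le_of_forall_sub_le fun t ht => ?_
  have hcomb : x + t • (y - x) = (1 - t) • x + t • y := by module
  have hconv := hφ.2 hx hy (sub_nonneg.2 ht.2) ht.1.le (by ring)
  have hle : φ x + f x ≤ φ _ + f _ := hmin (hφ.1 hx hy (sub_nonneg.2 ht.2) ht.1.le (by ring))
  rw [hcomb]
  simp only [smul_eq_mul] at hconv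
  simp only [Pi.neg_apply]
  linarith

end FirstOrder

section ExtendedValued

variable {E : Type*} {h : E → EReal}

theorem EReal.ne_top_of_add_coe_le_add_coe {x y : EReal} {c d : ℝ} (hle : x + c ≤ y + d)
    (hy : y ≠ ⊤) : x ≠ ⊤ := by
  rintro rfl
  rw [EReal.top_add_coe] at hle
  exact (EReal.add_lt_top hy (EReal.coe_ne_top d)).ne (top_le_iff.mp hle)

theorem convexOn_toReal_of_forall_le [AddCommGroup E] [Module ℝ E] (hnobot : ∀ v, h v ≠ ⊥)
    (hconvex : ∀ x y : E, ∀ t : ℝ, 0 ≤ t → t ≤ 1 →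
      h (t • x + (1 - t) • y) ≤ (t : EReal) * h x + ((1 - t : ℝ) : EReal) * h y) :
    ConvexOn ℝ {v | h v ≠ ⊤} fun v => (h v).toReal := by
  have hcomb : ∀ x, h x ≠ ⊤ → ∀ y, h y ≠ ⊤ → ∀ t : ℝ, 0 ≤ t → t ≤ 1 →
      h (t • x + (1 - t) • y) ≤ ((t * (h x).toReal + (1 - t) * (h y).toReal : ℝ) : EReal) := by
    intro x hx y hy t ht0 ht1
    have := hconvex x y t ht0 ht1
    rwa [← EReal.coe_toReal hx (hnobot x), ← EReal.coe_toReal hy (hnobot y), ← EReal.coe_mul,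
      ← EReal.coe_mul, ← EReal.coe_add] at this
  have hdom : ∀ x, h x ≠ ⊤ → ∀ y, h y ≠ ⊤ → ∀ t : ℝ, 0 ≤ t → t ≤ 1 →
      h (t • x + (1 - t) • y) ≠ ⊤ := fun x hx y hy t ht0 ht1 =>
    ne_top_of_le_ne_top (EReal.coe_ne_top _) (hcomb x hx y hy t ht0 ht1)
  refine ⟨fun x hx y hy a b ha hb hab => ?_, fun x hx y hy a b ha hb hab => ?_⟩ <;>
    obtain rfl : b = 1 - a := by linarith
  · exact hdom x hx y hy a ha (by linarith)
  · have hz := hdom x hx y hy a ha (by linarith)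
    have := hcomb x hx y hy a ha (by linarith)
    rw [← EReal.coe_toReal hz (hnobot _), EReal.coe_le_coe_iff] at this
    simpa only [smul_eq_mul] using this

theorem isMinOn_toReal_add_of_forall_le {f : E → ℝ} {x v₀ : E} (hnobot : ∀ v, h v ≠ ⊥)
    (hv₀ : h v₀ ≠ ⊤) (hmin : ∀ v, h x + (f x : EReal) ≤ h v + f v) :
    h x ≠ ⊤ ∧ IsMinOn (fun v => (h v).toReal + f v) {v | h v ≠ ⊤} x := by
  have hx : h x ≠ ⊤ := EReal.ne_top_of_add_coe_le_add_coe (hmin v₀) hv₀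
  refine ⟨hx, fun v (hv : h v ≠ ⊤) => ?_⟩
  have := hmin v
  rw [← EReal.coe_toReal hx (hnobot x), ← EReal.coe_toReal hv (hnobot v)] at this
  exact_mod_cast this

end ExtendedValued

section Gradient

variable {H : Type*} [NormedAddCommGroup H] [InnerProductSpace ℝ H] [CompleteSpace H]
  {l : H → ℝ} {l' : H → H}

theorem mul_norm_sub_sq_le_inner_of_convexOn_sub {μ : ℝ} (hgrad : ∀ x, HasGradientAt l (l' x) x)
    (hconv : ConvexOn ℝ univ fun x => l x - μ / 2 * ‖x‖ ^ 2) (x y : H) :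
    μ * ‖x - y‖ ^ 2 ≤ inner ℝ (l' x - l' y) (x - y) := by
  have hderiv : ∀ z, HasFDerivAt (fun x => l x - μ / 2 * ‖x‖ ^ 2)
      (InnerProductSpace.toDual ℝ H (l' z) - (μ / 2) • (2 • innerSL ℝ z)) z := fun z =>
    (hgrad z).hasFDerivAt.sub ((hasStrictFDerivAt_norm_sq z).hasFDerivAt.const_mul (μ / 2))
  have hxy := hconv.hasFDerivAt_apply_sub_le (mem_univ x) (mem_univ y) (hderiv x)
  have hyx := hconv.hasFDerivAt_apply_sub_le (mem_univ y) (mem_univ x) (hderiv y)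
  rw [norm_sub_sq_real]
  simp only [sub_apply, InnerProductSpace.toDual_apply_apply,
    smul_apply, coe_innerSL_apply, real_inner_self_eq_norm_sq, nsmul_eq_mul,
    Nat.cast_ofNat, smul_eq_mul, inner_sub_left, inner_sub_right] at hxy hyx ⊢
  rw [real_inner_comm x y] at hyx
  linarith

theorem norm_gradient_le_of_forall_le (hgrad : ∀ x, HasGradientAt l (l' x) x) {M : ℝ}
    (hsmooth : ∀ x y, ‖l' x - l' y‖ ≤ M * ‖x - y‖) {wbar : H} (hmin : ∀ v, l wbar ≤ l v)
    (x : H) : ‖l' x‖ ≤ M * ‖x - wbar‖ := by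
  have hzero : l' wbar = 0 := by
    simpa using IsLocalMin.hasFDerivAt_eq_zero (Eventually.of_forall hmin) (hgrad wbar).hasFDerivAt
  simpa [hzero] using hsmooth x wbar

theorem norm_sub_le_of_isMinOn_prox {φ : H → ℝ} {s : Set H} (hφ : ConvexOn ℝ s φ) {γ : ℝ}
    (hγ : 0 < γ) {G ws p u : H} (hl : HasGradientAt l G ws) (hws : ws ∈ s)
    (hmin : IsMinOn (fun v => φ v + l v) s ws) (hp : p ∈ s)
    (hprox : IsMinOn (fun v => φ v + ‖u - v‖ ^ 2 / (2 * γ)) s p) :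
    ‖p - ws‖ ≤ ‖u - (ws - γ • G)‖ := by
  have hq : HasFDerivAt (fun v => ‖u - v‖ ^ 2 / (2 * γ)) (-γ⁻¹ • innerSL ℝ (u - p)) p := by
    have := (((hasFDerivAt_const u p).sub (hasFDerivAt_id p)).norm_sq).mul_const (2 * γ)⁻¹
    simp only [div_eq_mul_inv]
    refine this.congr_fderiv ?_
    ext v
    simp only [mul_inv_rev, Pi.sub_apply, id_eq, map_sub, zero_sub, ContinuousLinearMap.comp_neg,
      ContinuousLinearMap.comp_id, neg_sub, smul_apply, sub_apply, coe_innerSL_apply, nsmul_eq_mul,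
      Nat.cast_ofNat, smul_eq_mul, neg_smul, neg_apply]
    field_simp
    ring
  have hprox_opt := hφ.sub_le_of_isMinOn_add hp hws hq hprox
  have hmin_opt := hφ.sub_le_of_isMinOn_add hws hp hl.hasFDerivAt hmin
  simp only [smul_apply, neg_smul, neg_apply,
    coe_innerSL_apply, smul_eq_mul, InnerProductSpace.toDual_apply_apply] at hprox_opt hmin_opt
  have hvar : inner ℝ (u - p) (ws - p) ≤ γ * inner ℝ G (p - ws) := by
    have h1 : γ⁻¹ * inner ℝ (u - p) (ws - p) ≤ φ ws - φ p := by linarith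
    rw [inv_mul_le_iff₀ hγ] at h1
    nlinarith [mul_le_mul_of_nonneg_left hmin_opt hγ.le]
  have hsq : ‖p - ws‖ ^ 2 ≤ inner ℝ (u - (ws - γ • G)) (p - ws) := by
    have hsplit : u - (ws - γ • G) = (p - ws) - (p - u) + γ • G := by abel
    have hflip : inner ℝ (p - u) (p - ws) = inner ℝ (u - p) (ws - p) := by
      rw [← neg_sub u p, ← neg_sub ws p, inner_neg_neg]
    rw [hsplit, inner_add_left, inner_sub_left, real_inner_self_eq_norm_sq, real_inner_smul_left,
      hflip]
    linarith
  nlinarith [real_inner_le_norm (u - (ws - γ • G)) (p - ws), norm_nonneg (p - ws),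
    norm_nonneg (u - (ws - γ • G))]

theorem norm_sub_le_of_forall_prox_ereal {h : H → EReal} (hnobot : ∀ v, h v ≠ ⊥)
    (hconvex : ∀ x y : H, ∀ t : ℝ, 0 ≤ t → t ≤ 1 →
      h (t • x + (1 - t) • y) ≤ (t : EReal) * h x + ((1 - t : ℝ) : EReal) * h y)
    {v₀ : H} (hv₀ : h v₀ ≠ ⊤) {γ : ℝ} (hγ : 0 < γ) {G ws p u : H} (hl : HasGradientAt l G ws)
    (hmin : ∀ v, (l ws : EReal) + h ws ≤ (l v : EReal) + h v)
    (hprox : ∀ v, h p + ((‖u - p‖ ^ 2 / (2 * γ) : ℝ) : EReal)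
      ≤ h v + ((‖u - v‖ ^ 2 / (2 * γ) : ℝ) : EReal)) :
    ‖p - ws‖ ≤ ‖u - (ws - γ • G)‖ := by
  obtain ⟨hws, hmin'⟩ := isMinOn_toReal_add_of_forall_le (f := l) hnobot hv₀
    fun v => by rw [add_comm (h ws), add_comm (h v)]; exact hmin v
  obtain ⟨hp, hprox'⟩ := isMinOn_toReal_add_of_forall_le
    (f := fun v => ‖u - v‖ ^ 2 / (2 * γ)) hnobot hv₀ hprox
  exact norm_sub_le_of_isMinOn_prox (convexOn_toReal_of_forall_le hnobot hconvex) hγ hl hws hmin'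
    hp hprox'

end Gradient

section Expectation

variable {Ω H : Type*} {m₀ : MeasurableSpace Ω} {P : Measure Ω}
  [NormedAddCommGroup H] [InnerProductSpace ℝ H]

theorem MeasureTheory.MemLp.integrable_inner {f g : Ω → H} (hf : MemLp f 2 P) (hg : MemLp g 2 P) :
    Integrable (fun ω => inner ℝ (f ω) (g ω)) P := by
  refine (L2.integrable_inner (𝕜 := ℝ) hf.toLp hg.toLp).congr ?_
  filter_upwards [hf.coeFn_toLp, hg.coeFn_toLp] with ω hfω hgω
  rw [hfω, hgω]

theorem integral_norm_sub_smul_sq {y e : Ω → H} (hy : MemLp y 2 P) (he : MemLp e 2 P) (γ : ℝ) :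
    ∫ ω, ‖y ω - γ • e ω‖ ^ 2 ∂P = ∫ ω, ‖y ω‖ ^ 2 ∂P - 2 * γ * ∫ ω, inner ℝ (y ω) (e ω) ∂P
      + γ ^ 2 * ∫ ω, ‖e ω‖ ^ 2 ∂P := by
  have hy2 : Integrable (fun ω => ‖y ω‖ ^ 2) P := (memLp_two_iff_integrable_sq_norm hy.1).1 hy
  have he2 : Integrable (fun ω => γ ^ 2 * ‖e ω‖ ^ 2) P :=
    ((memLp_two_iff_integrable_sq_norm he.1).1 he).const_mul _
  have hye : Integrable (fun ω => 2 * γ * inner ℝ (y ω) (e ω)) P :=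
    (hy.integrable_inner he).const_mul _
  have hdiff : Integrable (fun ω => ‖y ω‖ ^ 2 - 2 * γ * inner ℝ (y ω) (e ω)) P := hy2.sub hye
  have hexpand : ∀ ω, ‖y ω - γ • e ω‖ ^ 2
      = ‖y ω‖ ^ 2 - 2 * γ * inner ℝ (y ω) (e ω) + γ ^ 2 * ‖e ω‖ ^ 2 := fun ω => by
    rw [norm_sub_sq_real, real_inner_smul_right, norm_smul, Real.norm_eq_abs, mul_pow, sq_abs]
    ring
  simp only [hexpand]
  rw [integral_add hdiff he2, integral_sub hy2 hye, integral_const_mul, integral_const_mul]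

theorem integral_inner_eq_of_condExp_ae_eq [CompleteSpace H] [IsFiniteMeasure P]
    {m : MeasurableSpace Ω} (hm : m ≤ m₀) {f g G : Ω → H} (hf : StronglyMeasurable[m] f)
    (hfg : Integrable (fun ω => inner ℝ (f ω) (g ω)) P) (hg : Integrable g P)
    (hG : P[g | m] =ᵐ[P] G) :
    ∫ ω, inner ℝ (f ω) (g ω) ∂P = ∫ ω, inner ℝ (f ω) (G ω) ∂P := by
  rw [← integral_condExp hm]
  refine integral_congr_ae ?_
  filter_upwards [condExp_bilin_of_stronglyMeasurable_left (innerSL ℝ) hf hfg hg, hG]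
    with ω hpull hω
  exact hpull.trans (by rw [hω, innerSL_apply_apply])

theorem integral_le_of_condExp_le [IsFiniteMeasure P] {m : MeasurableSpace Ω} (hm : m ≤ m₀)
    {f F : Ω → ℝ} (hF : Integrable F P) (hle : P[f | m] ≤ᵐ[P] F) :
    ∫ ω, f ω ∂P ≤ ∫ ω, F ω ∂P := by
  rw [← integral_condExp hm]
  exact integral_mono_ae integrable_condExp hF hle

end Expectation

section StochasticStep

variable {Ω H : Type*} [MeasurableSpace Ω] {P : Measure Ω} [IsProbabilityMeasure P]
  [NormedAddCommGroup H] [InnerProductSpace ℝ H] [MeasurableSpace H] {x g : Ω → H} {ws : H}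

theorem integral_norm_sub_sq_le_of_condExp_le {a b : ℝ} (hx : Measurable x) (hgL2 : MemLp g 2 P)
    (hxsq : Integrable (fun ω => ‖x ω - ws‖ ^ 2) P)
    (hnoise : P[fun ω => ‖g ω‖ ^ 2 | MeasurableSpace.comap x ‹_›]
      ≤ᵐ[P] fun ω => a * ‖x ω - ws‖ ^ 2 + b) (G : H) :
    ∫ ω, ‖g ω - G‖ ^ 2 ∂P ≤ 2 * (a * ∫ ω, ‖x ω - ws‖ ^ 2 ∂P + b) + 2 * ‖G‖ ^ 2 := by
  have hgsq : Integrable (fun ω => ‖g ω‖ ^ 2) P :=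
    (memLp_two_iff_integrable_sq_norm hgL2.1).1 hgL2
  have hsecond : ∫ ω, ‖g ω‖ ^ 2 ∂P ≤ a * ∫ ω, ‖x ω - ws‖ ^ 2 ∂P + b := by
    have : ∫ ω, ‖g ω‖ ^ 2 ∂P ≤ ∫ ω, (a * ‖x ω - ws‖ ^ 2 + b) ∂P :=
      integral_le_of_condExp_le hx.comap_le ((hxsq.const_mul a).add (integrable_const b))
      hnoise
    rwa [integral_add (hxsq.const_mul a) (integrable_const b), integral_const_mul,
      integral_const, probReal_univ, one_smul] at this
  have hpar : ∀ ω, ‖g ω - G‖ ^ 2 ≤ 2 * ‖g ω‖ ^ 2 + 2 * ‖G‖ ^ 2 := fun ω => by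
    nlinarith [parallelogram_law_with_norm ℝ (g ω) G, sq_nonneg ‖g ω + G‖]
  have : ∫ ω, ‖g ω - G‖ ^ 2 ∂P ≤ ∫ ω, (2 * ‖g ω‖ ^ 2 + 2 * ‖G‖ ^ 2) ∂P :=
    integral_mono ((memLp_two_iff_integrable_sq_norm (hgL2.sub (memLp_const G)).1).1
      (hgL2.sub (memLp_const G))) ((hgsq.const_mul 2).add (integrable_const _)) hpar
  rw [integral_add (hgsq.const_mul 2) (integrable_const _), integral_const_mul, integral_const,
    probReal_univ, one_smul] at this
  linarith

variable [CompleteSpace H] [SecondCountableTopology H] [BorelSpace H] {l' : H → H}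

theorem mul_integral_le_integral_inner_of_condExp_eq {μ M : ℝ} (hx : Measurable x)
    (hxL2 : MemLp (fun ω => x ω - ws) 2 P) (hgL2 : MemLp g 2 P) (hl' : Continuous l')
    (hlip : ∀ v, ‖l' v - l' ws‖ ≤ M * ‖v - ws‖)
    (hmono : ∀ v, μ * ‖v - ws‖ ^ 2 ≤ inner ℝ (l' v - l' ws) (v - ws))
    (hunbiased : P[g | MeasurableSpace.comap x ‹_›] =ᵐ[P] fun ω => l' (x ω)) :
    μ * ∫ ω, ‖x ω - ws‖ ^ 2 ∂P ≤ ∫ ω, inner ℝ (x ω - ws) (g ω - l' ws) ∂P := by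
  have hm : MeasurableSpace.comap x ‹_› ≤ ‹MeasurableSpace Ω› := hx.comap_le
  have hg : Integrable g P := hgL2.integrable one_le_two
  have hcond : P[fun ω => g ω - l' ws | MeasurableSpace.comap x ‹_›]
      =ᵐ[P] fun ω => l' (x ω) - l' ws := by
    filter_upwards [condExp_sub hg (integrable_const (l' ws)) (MeasurableSpace.comap x ‹_›),
      hunbiased] with ω hsub hω
    refine hsub.trans ?_
    rw [Pi.sub_apply, hω, condExp_const hm]
  have hxm : Measurable[MeasurableSpace.comap x ‹_›] fun ω => x ω - ws :=
    (comap_measurable x).sub_const ws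
  have hxsq : Integrable (fun ω => ‖x ω - ws‖ ^ 2) P :=
    (memLp_two_iff_integrable_sq_norm hxL2.1).1 hxL2
  have hdrift : Integrable (fun ω => inner ℝ (x ω - ws) (l' (x ω) - l' ws)) P := by
    refine (hxsq.const_mul M).mono' ((hx.sub_const ws).inner
      ((hl'.measurable.comp hx).sub_const _)).aestronglyMeasurable (ae_of_all _ fun ω => ?_)
    calc ‖inner ℝ (x ω - ws) (l' (x ω) - l' ws)‖ ≤ ‖x ω - ws‖ * (M * ‖x ω - ws‖) :=
          (norm_inner_le_norm _ _).trans
            (mul_le_mul_of_nonneg_left (hlip (x ω)) (norm_nonneg _))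
      _ = M * ‖x ω - ws‖ ^ 2 := by ring
  have hpull : ∫ ω, inner ℝ (x ω - ws) (g ω - l' ws) ∂P
      = ∫ ω, inner ℝ (x ω - ws) (l' (x ω) - l' ws) ∂P :=
    integral_inner_eq_of_condExp_ae_eq hm hxm.stronglyMeasurable
      (hxL2.integrable_inner (hgL2.sub (memLp_const _))) (hg.sub (integrable_const _)) hcond
  rw [hpull, ← integral_const_mul]
  exact integral_mono (hxsq.const_mul μ) hdrift fun ω => by
    rw [real_inner_comm]; exact hmono (x ω)

theorem integral_norm_sub_sq_le_of_prox_step {μ M a b γ : ℝ} {x' : Ω → H} (hγ : 0 ≤ γ)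
    (hγa : 2 * a * γ ≤ μ) (hx : Measurable x) (hg : Integrable g P)
    (hgsq : Integrable (fun ω => ‖g ω‖ ^ 2) P) (hxsq : Integrable (fun ω => ‖x ω - ws‖ ^ 2) P)
    (hl' : Continuous l') (hlip : ∀ v, ‖l' v - l' ws‖ ≤ M * ‖v - ws‖)
    (hmono : ∀ v, μ * ‖v - ws‖ ^ 2 ≤ inner ℝ (l' v - l' ws) (v - ws))
    (hunbiased : P[g | MeasurableSpace.comap x ‹_›] =ᵐ[P] fun ω => l' (x ω))
    (hnoise : P[fun ω => ‖g ω‖ ^ 2 | MeasurableSpace.comap x ‹_›]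
      ≤ᵐ[P] fun ω => a * ‖x ω - ws‖ ^ 2 + b)
    (hx'sq : Integrable (fun ω => ‖x' ω - ws‖ ^ 2) P)
    (hstep : ∀ ω, ‖x' ω - ws‖ ≤ ‖x ω - γ • g ω - (ws - γ • l' ws)‖) :
    ∫ ω, ‖x' ω - ws‖ ^ 2 ∂P
      ≤ (1 - γ * μ) * ∫ ω, ‖x ω - ws‖ ^ 2 ∂P + 2 * γ ^ 2 * (b + ‖l' ws‖ ^ 2) := by
  have hxL2 : MemLp (fun ω => x ω - ws) 2 P :=
    (memLp_two_iff_integrable_sq_norm (hx.sub_const ws).aestronglyMeasurable).2 hxsq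
  have hgL2 : MemLp g 2 P := (memLp_two_iff_integrable_sq_norm hg.aestronglyMeasurable).2 hgsq
  have heL2 : MemLp (fun ω => g ω - l' ws) 2 P := hgL2.sub (memLp_const _)
  have hcross := mul_integral_le_integral_inner_of_condExp_eq hx hxL2 hgL2 hl' hlip hmono hunbiased
  have hvar := integral_norm_sub_sq_le_of_condExp_le hx hgL2 hxsq hnoise (l' ws)
  have hsq : Integrable (fun ω => ‖(x ω - ws) - γ • (g ω - l' ws)‖ ^ 2) P :=
    (memLp_two_iff_integrable_sq_norm (hxL2.sub (heL2.const_smul γ)).1).1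
      (hxL2.sub (heL2.const_smul γ))
  have hmean : ∫ ω, ‖x' ω - ws‖ ^ 2 ∂P ≤ ∫ ω, ‖(x ω - ws) - γ • (g ω - l' ws)‖ ^ 2 ∂P := by
    refine integral_mono hx'sq hsq fun ω =>
      pow_le_pow_left₀ (norm_nonneg _) ((hstep ω).trans_eq ?_) 2
    rw [smul_sub]
    abel_nf
  rw [integral_norm_sub_smul_sq hxL2 heL2] at hmean
  have hX : 0 ≤ ∫ ω, ‖x ω - ws‖ ^ 2 ∂P := integral_nonneg fun ω => sq_nonneg _
  nlinarith [mul_le_mul_of_nonneg_left hcross (by positivity : 0 ≤ 2 * γ),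
    mul_le_mul_of_nonneg_left hvar (sq_nonneg γ), mul_le_mul_of_nonneg_right hγa (mul_nonneg hγ hX)]

end StochasticStep

theorem le_pow_mul_add_of_forall_le_mul_add {u : ℕ → ℝ} {ρ B : ℝ} (hρ : 0 ≤ ρ) (hB : 0 ≤ B)
    (h : ∀ t, u (t + 1) ≤ ρ * u t + (1 - ρ) * B) (t : ℕ) : u t ≤ ρ ^ t * u 0 + B := by
  induction t with
  | zero => simpa using hB
  | succ t ih =>
    calc u (t + 1) ≤ ρ * u t + (1 - ρ) * B := h t
      _ ≤ ρ * (ρ ^ t * u 0 + B) + (1 - ρ) * B := by gcongr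
      _ = ρ ^ (t + 1) * u 0 + B := by ring

theorem prox_sgd_strongly_convex_constant_stepsize_general
    {H : Type*} [NormedAddCommGroup H] [InnerProductSpace ℝ H]
    [FiniteDimensional ℝ H] [MeasurableSpace H] [BorelSpace H]
    {Ω : Type*} [MeasurableSpace Ω] (P : Measure Ω) [IsProbabilityMeasure P]
    (l : H → ℝ) (l' : H → H) (h : H → EReal)
    (μ M a b γ : ℝ) (wbar wstar w0 : H)
    (w g : ℕ → Ω → H)
    (hμ : 0 < μ) (ha : 0 < a) (hb : 0 ≤ b)
    -- `l` is differentiable with gradient `l'`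
    (hgrad : ∀ x, HasGradientAt l (l' x) x)
    -- `l` is `μ`-strongly convex
    (hstrong : ConvexOn ℝ Set.univ (fun x => l x - μ / 2 * ‖x‖ ^ 2))
    -- `l` is `M`-smooth
    (hsmooth : ∀ x y, ‖l' x - l' y‖ ≤ M * ‖x - y‖)
    -- `wbar` is the minimizer of `l`
    (hlmin : ∀ v, l wbar ≤ l v)
    -- `h` is proper, closed and convex
    (hproper : ∃ v, h v ≠ ⊤) (hnobot : ∀ v, h v ≠ ⊥)
    (hconvex : ∀ x y : H, ∀ t : ℝ, 0 ≤ t → t ≤ 1 →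
      h (t • x + (1 - t) • y) ≤ (t : EReal) * h x + ((1 - t : ℝ) : EReal) * h y)
    -- `wstar` is the minimizer of `l + h`
    (hmin : ∀ v, (l wstar : EReal) + h wstar ≤ (l v : EReal) + h v)
    -- stepsize
    (hγ0 : 0 < γ) (hγ : γ ≤ min (μ / (2 * a)) (1 / μ))
    -- deterministic initialization
    (hw0 : ∀ ω, w 0 ω = w0)
    -- Prox-SGD iterates: `w (t+1) = prox_{γ h} (w t - γ • g t)`
    (hiter : ∀ t ω, ∀ v : H,
      h (w (t + 1) ω) + ((‖w t ω - γ • g t ω - w (t + 1) ω‖ ^ 2 / (2 * γ) : ℝ) : EReal)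
        ≤ h v + ((‖w t ω - γ • g t ω - v‖ ^ 2 / (2 * γ) : ℝ) : EReal))
    -- measurability and integrability
    (hwmeas : ∀ t, Measurable (w t))
    (hgint : ∀ t, Integrable (g t) P)
    (hgsqint : ∀ t, Integrable (fun ω => ‖g t ω‖ ^ 2) P)
    (hwsqint : ∀ t, Integrable (fun ω => ‖w t ω - wstar‖ ^ 2) P)
    -- conditionally on `w t`, `g t` is an unbiased estimator of `∇ l (w t)` ...
    (hunbiased : ∀ t, P[g t | MeasurableSpace.comap (w t) ‹MeasurableSpace H›]
        =ᵐ[P] fun ω => l' (w t ω))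
    -- ... whose expected squared norm is quadratically bounded with parameters `(a, b, wstar)`
    (hnoise : ∀ t, P[(fun ω => ‖g t ω‖ ^ 2) | MeasurableSpace.comap (w t) ‹MeasurableSpace H›]
        ≤ᵐ[P] fun ω => a * ‖w t ω - wstar‖ ^ 2 + b) :
    ∀ T : ℕ, ∫ ω, ‖w (T + 1) ω - wstar‖ ^ 2 ∂P
      ≤ (1 - γ * μ) ^ T * ‖w0 - wstar‖ ^ 2
        + 2 * γ / μ * (b + M ^ 2 * ‖wstar - wbar‖ ^ 2) := by
  obtain ⟨v₀, hv₀⟩ := hproper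
  have hγμ : γ * μ ≤ 1 := by
    have := hγ.trans (min_le_right _ _); rwa [le_div_iff₀ hμ] at this
  have hγa : 2 * a * γ ≤ μ := by
    have := hγ.trans (min_le_left _ _); rwa [le_div_iff₀ (by positivity), mul_comm] at this
  have hl' : Continuous l' :=
    (LipschitzWith.of_dist_le' fun x y => by simpa only [dist_eq_norm] using hsmooth x y).continuous
  set D := b + M ^ 2 * ‖wstar - wbar‖ ^ 2
  have hstep : ∀ t, ∫ ω, ‖w (t + 1) ω - wstar‖ ^ 2 ∂P ≤ (1 - γ * μ) * ∫ ω, ‖w t ω - wstar‖ ^ 2 ∂P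
      + (1 - (1 - γ * μ)) * (2 * γ / μ * D) := fun t => by
    have hG := norm_gradient_le_of_forall_le hgrad hsmooth hlmin wstar
    have := integral_norm_sub_sq_le_of_prox_step hγ0.le hγa (hwmeas t) (hgint t) (hgsqint t)
      (hwsqint t) hl' (fun v => hsmooth v wstar)
      (fun v => mul_norm_sub_sq_le_inner_of_convexOn_sub hgrad hstrong v wstar) (hunbiased t)
      (hnoise t) (hwsqint (t + 1)) fun ω =>
        norm_sub_le_of_forall_prox_ereal hnobot hconvex hv₀ hγ0 (hgrad wstar) hmin (hiter t ω)
    have hD : (1 - (1 - γ * μ)) * (2 * γ / μ * D) = 2 * γ ^ 2 * D := by field_simp; ring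
    rw [hD]
    nlinarith [pow_le_pow_left₀ (norm_nonneg _) hG 2]
  intro T
  have hX0 : ∫ ω, ‖w 0 ω - wstar‖ ^ 2 ∂P = ‖w0 - wstar‖ ^ 2 := by simp [hw0]
  have hρ : 0 ≤ 1 - γ * μ := by linarith
  have hrec : ∫ ω, ‖w (T + 1) ω - wstar‖ ^ 2 ∂P
      ≤ (1 - γ * μ) ^ (T + 1) * ‖w0 - wstar‖ ^ 2 + 2 * γ / μ * D := by
    simpa only [hX0] using le_pow_mul_add_of_forall_le_mul_add
      (u := fun t => ∫ ω, ‖w t ω - wstar‖ ^ 2 ∂P) hρ (by positivity) hstep (T + 1)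
  have hdecay := pow_le_pow_of_le_one hρ (by linarith [mul_pos hγ0 hμ]) (Nat.le_add_right T 1)
  linarith [mul_le_mul_of_nonneg_right hdecay (sq_nonneg ‖w0 - wstar‖)]

/-- **Prox-SGD, strongly convex case.**
If `l` is `μ`-strongly convex and `M`-smooth with minimizer `wbar`, `h` is proper closed
convex with `wstar` the minimizer of `l + h`, and the Prox-SGD iterates use a constant
stepsize `γ ∈ (0, min (μ/(2a)) (1/μ)]` with gradient estimators that, conditionally on
`w t`, are quadratically bounded for `∇ l` with parameters `(a, b, wstar)`, then
`E‖w (T+1) − wstar‖² ≤ (1 − γμ)^T ‖w 0 − wstar‖² + (2γ/μ)(b + M²‖wstar − wbar‖²)`. -/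
theorem prox_sgd_strongly_convex_constant_stepsize
    {H : Type*} [NormedAddCommGroup H] [InnerProductSpace ℝ H]
    [FiniteDimensional ℝ H] [MeasurableSpace H] [BorelSpace H]
    {Ω : Type*} [MeasurableSpace Ω] (P : Measure Ω) [IsProbabilityMeasure P]
    (l : H → ℝ) (l' : H → H) (h : H → EReal)
    (μ M a b γ : ℝ) (wbar wstar w0 : H)
    (w g : ℕ → Ω → H)
    (hμ : 0 < μ) (hM : 0 < M) (ha : 0 < a) (hb : 0 ≤ b)
    -- `l` is differentiable with gradient `l'`
    (hgrad : ∀ x, HasGradientAt l (l' x) x)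
    -- `l` is `μ`-strongly convex
    (hstrong : ConvexOn ℝ Set.univ (fun x => l x - μ / 2 * ‖x‖ ^ 2))
    -- `l` is `M`-smooth
    (hsmooth : ∀ x y, ‖l' x - l' y‖ ≤ M * ‖x - y‖)
    -- `wbar` is the minimizer of `l`
    (hlmin : ∀ v, l wbar ≤ l v)
    -- `h` is proper, closed and convex
    (hproper : ∃ v, h v ≠ ⊤) (hnobot : ∀ v, h v ≠ ⊥)
    (hclosed : LowerSemicontinuous h)
    (hconvex : ∀ x y : H, ∀ t : ℝ, 0 ≤ t → t ≤ 1 →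
      h (t • x + (1 - t) • y) ≤ (t : EReal) * h x + ((1 - t : ℝ) : EReal) * h y)
    -- `wstar` is the minimizer of `l + h`
    (hmin : ∀ v, (l wstar : EReal) + h wstar ≤ (l v : EReal) + h v)
    -- stepsize
    (hγ0 : 0 < γ) (hγ : γ ≤ min (μ / (2 * a)) (1 / μ))
    -- deterministic initialization
    (hw0 : ∀ ω, w 0 ω = w0)
    -- Prox-SGD iterates: `w (t+1) = prox_{γ h} (w t - γ • g t)`
    (hiter : ∀ t ω, ∀ v : H,
      h (w (t + 1) ω) + ((‖w t ω - γ • g t ω - w (t + 1) ω‖ ^ 2 / (2 * γ) : ℝ) : EReal)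
        ≤ h v + ((‖w t ω - γ • g t ω - v‖ ^ 2 / (2 * γ) : ℝ) : EReal))
    -- measurability and integrability
    (hwmeas : ∀ t, Measurable (w t))
    (hgmeas : ∀ t, Measurable (g t))
    (hgint : ∀ t, Integrable (g t) P)
    (hgsqint : ∀ t, Integrable (fun ω => ‖g t ω‖ ^ 2) P)
    (hwsqint : ∀ t, Integrable (fun ω => ‖w t ω - wstar‖ ^ 2) P)
    -- conditionally on `w t`, `g t` is an unbiased estimator of `∇ l (w t)` ...
    (hunbiased : ∀ t, P[g t | MeasurableSpace.comap (w t) ‹MeasurableSpace H›]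
        =ᵐ[P] fun ω => l' (w t ω))
    -- ... whose expected squared norm is quadratically bounded with parameters `(a, b, wstar)`
    (hnoise : ∀ t, P[(fun ω => ‖g t ω‖ ^ 2) | MeasurableSpace.comap (w t) ‹MeasurableSpace H›]
        ≤ᵐ[P] fun ω => a * ‖w t ω - wstar‖ ^ 2 + b) :
    ∀ T : ℕ, ∫ ω, ‖w (T + 1) ω - wstar‖ ^ 2 ∂P
      ≤ (1 - γ * μ) ^ T * ‖w0 - wstar‖ ^ 2
        + 2 * γ / μ * (b + M ^ 2 * ‖wstar - wbar‖ ^ 2) :=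
  prox_sgd_strongly_convex_constant_stepsize_general P l l' h μ M a b γ wbar wstar w0 w g hμ ha hb
    hgrad hstrong hsmooth hlmin hproper hnobot hconvex hmin hγ0 hγ hw0 hiter hwmeas hgint hgsqint
    hwsqint hunbiased hnoise
end

section
/- Let H be a real finite-dimensional inner product space, let W ⊆ H be a nonempty closed convex set, let f : H → ℝ be μ-strongly convex and differentiable on W, and let w* be the minimizer of f over W. Let (w^t) be generated by Proj-SGD with constant stepsize γ ∈ (0, min{μ/(2a), 2/μ}], where conditionally on w^t the estimator g^t is a quadratically bounded estimator for ∇f at w^t with parameters (a, b, w*). Then for every T ≥ 0, E‖w^T − w*‖² ≤ (1 − μγ/2)^T ‖w⁰ − w*‖² + 2γb/μ. -/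
open MeasureTheory

open scoped RealInnerProductSpace

/-! Projecting onto a convex set `W` does not increase the distance to any point of `W`, so
`‖w (t+1) - w*‖² ≤ ‖w t - w*‖² - 2γ⟪w t - w*, g t⟫ + γ²‖g t‖²`. Conditioning on `w t` turns
`g t` into `∇f (w t)` in the cross term, and strong convexity at the minimizer gives
`⟪x - w*, ∇f x⟫ ≥ (μ/2)‖x - w*‖²`; with `E‖g t‖² ≤ a E‖w t - w*‖² + b` and `γa ≤ μ/2` this yields
`E‖w (t+1) - w*‖² ≤ (1 - μγ/2) E‖w t - w*‖² + γ²b`, a recursion whose fixed point is `2γb/μ`. -/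

theorem le_pow_mul_add_of_le_mul_add {u : ℕ → ℝ} {q r : ℝ} (hq : 0 ≤ q) (hr : 0 ≤ r)
    (h : ∀ t, u (t + 1) ≤ q * u t + (1 - q) * r) (T : ℕ) : u T ≤ q ^ T * u 0 + r := by
  induction T with
  | zero => simpa using hr
  | succ T ih =>
    calc u (T + 1) ≤ q * u T + (1 - q) * r := h T
      _ ≤ q * (q ^ T * u 0 + r) + (1 - q) * r := by gcongr
      _ = q ^ (T + 1) * u 0 + r := by ring

section Convexity

variable {E : Type*} [NormedAddCommGroup E] [InnerProductSpace ℝ E] {s : Set E}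

theorem Convex.norm_sub_le_of_forall_norm_sub_le (hs : Convex ℝ s) {u p v : E} (hp : p ∈ s)
    (hv : v ∈ s) (hmin : ∀ q ∈ s, ‖p - u‖ ≤ ‖q - u‖) : ‖p - v‖ ≤ ‖u - v‖ := by
  have : Nonempty s := ⟨⟨p, hp⟩⟩
  have hinf : ‖u - p‖ = ⨅ q : s, ‖u - q‖ := by
    refine le_antisymm (le_ciInf fun q => ?_) (ciInf_le (f := fun q : s => ‖u - q‖) ⟨0, ?_⟩ ⟨p, hp⟩)
    · simpa only [norm_sub_rev u] using hmin q q.2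
    · rintro _ ⟨q, rfl⟩; exact norm_nonneg _
  have hobtuse : ⟪u - p, v - p⟫ ≤ 0 := (norm_eq_iInf_iff_real_inner_le_zero hs hp).1 hinf v hv
  have hsplit : ‖u - v‖ ^ 2 = ‖u - p‖ ^ 2 - 2 * ⟪u - p, v - p⟫ + ‖p - v‖ ^ 2 := by
    rw [show u - v = (u - p) - (v - p) by abel, norm_sub_sq_real, norm_sub_rev v p]
  refine (sq_le_sq₀ (norm_nonneg _) (norm_nonneg _)).1 ?_
  nlinarith [sq_nonneg ‖u - p‖]

theorem Convex.norm_sub_sq_le_of_forall_norm_sub_smul_le (hs : Convex ℝ s) {x x' g x₀ : E}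
    {γ : ℝ} (hx' : x' ∈ s) (hx₀ : x₀ ∈ s)
    (hproj : ∀ v ∈ s, ‖x' - (x - γ • g)‖ ≤ ‖v - (x - γ • g)‖) :
    ‖x' - x₀‖ ^ 2 ≤ ‖x - x₀‖ ^ 2 - 2 * γ * ⟪x - x₀, g⟫ + γ ^ 2 * ‖g‖ ^ 2 := by
  calc ‖x' - x₀‖ ^ 2 ≤ ‖(x - x₀) - γ • g‖ ^ 2 := by
        rw [sub_right_comm]
        gcongr
        exact hs.norm_sub_le_of_forall_norm_sub_le hx' hx₀ hproj
    _ = ‖x - x₀‖ ^ 2 - 2 * γ * ⟪x - x₀, g⟫ + γ ^ 2 * ‖g‖ ^ 2 := by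
        rw [norm_sub_sq_real, real_inner_smul_right, norm_smul, mul_pow, Real.norm_eq_abs, sq_abs]
        ring

variable [CompleteSpace E] {x y G : E}

theorem ConvexOn.add_inner_sub_le_of_hasGradientAt {φ : E → ℝ} (hφ : ConvexOn ℝ s φ)
    (hx : x ∈ s) (hy : y ∈ s) (hG : HasGradientAt φ G x) : φ x + ⟪G, y - x⟫ ≤ φ y := by
  have hψ : ConvexOn ℝ (Set.Icc (0 : ℝ) 1) (φ ∘ (AffineMap.lineMap x y : ℝ → E)) :=
    (hφ.comp_affineMap _).subset (fun _ ht => hφ.1.lineMap_mem hx hy ht) (convex_Icc 0 1)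
  have hψ' : HasDerivAt (φ ∘ (AffineMap.lineMap x y : ℝ → E)) ⟪G, y - x⟫ 0 := by
    have hline : HasDerivAt (AffineMap.lineMap x y : ℝ → E) (y - x) 0 :=
      AffineMap.hasDerivAt_lineMap
    simpa using hG.hasFDerivAt.comp_hasDerivAt_of_eq 0 hline (by simp)
  have hslope := hψ.le_slope_of_hasDerivAt (Set.left_mem_Icc.2 zero_le_one)
    (Set.right_mem_Icc.2 zero_le_one) one_pos hψ'
  simp only [slope_def_field, Function.comp_apply, AffineMap.lineMap_apply_one,
    AffineMap.lineMap_apply_zero, sub_zero, div_one] at hslope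
  linarith

theorem StrongConvexOn.add_inner_sub_add_le_of_hasGradientAt {f : E → ℝ} {m : ℝ}
    (hf : StrongConvexOn s m f) (hx : x ∈ s) (hy : y ∈ s) (hG : HasGradientAt f G x) :
    f x + ⟪G, y - x⟫ + m / 2 * ‖y - x‖ ^ 2 ≤ f y := by
  have hG' : HasGradientAt (fun v => f v - m / 2 * ‖v‖ ^ 2) (G - m • x) x := by
    rw [hasGradientAt_iff_hasFDerivAt]
    refine (hG.hasFDerivAt.sub
      ((hasStrictFDerivAt_norm_sq x).hasFDerivAt.const_mul (m / 2))).congr_fderiv ?_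
    ext v
    simp only [sub_apply, InnerProductSpace.toDual_apply_apply, smul_apply, coe_innerSL_apply, nsmul_eq_mul, Nat.cast_ofNat,
      smul_eq_mul, map_sub, map_smul]
    ring
  have hfirst := (strongConvexOn_iff_convex.1 hf).add_inner_sub_le_of_hasGradientAt hx hy hG'
  rw [norm_sub_sq_real]
  simp only [inner_sub_left, inner_sub_right, real_inner_smul_left, real_inner_self_eq_norm_sq,
    real_inner_comm x y] at hfirst ⊢
  linarith

theorem StrongConvexOn.mul_norm_sub_sq_le_inner_of_isMinOn {f : E → ℝ} {m : ℝ} {x₀ : E}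
    (hf : StrongConvexOn s m f) (hx : x ∈ s) (hx₀ : x₀ ∈ s) (hmin : IsMinOn f s x₀)
    (hG : HasGradientAt f G x) : m / 2 * ‖x - x₀‖ ^ 2 ≤ ⟪x - x₀, G⟫ := by
  have h := hf.add_inner_sub_add_le_of_hasGradientAt hx hx₀ hG
  have hfx : f x₀ ≤ f x := hmin hx
  rw [norm_sub_rev, real_inner_comm, ← neg_sub, inner_neg_left] at h
  linarith

end Convexity

section Expectation

variable {Ω E : Type*} [mΩ : MeasurableSpace Ω] {P : Measure Ω} [NormedAddCommGroup E]
  [InnerProductSpace ℝ E]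

theorem integrable_inner_of_integrable_norm_sq {u v : Ω → E} (hu : AEStronglyMeasurable u P)
    (hv : AEStronglyMeasurable v P) (hu2 : Integrable (fun ω => ‖u ω‖ ^ 2) P)
    (hv2 : Integrable (fun ω => ‖v ω‖ ^ 2) P) : Integrable (fun ω => ⟪u ω, v ω⟫) P := by
  refine ((hu2.add hv2).div_const 2).mono' (hu.inner hv) (ae_of_all _ fun ω => ?_)
  have := abs_real_inner_le_norm (u ω) (v ω)
  simp only [Real.norm_eq_abs, Pi.add_apply]
  nlinarith [sq_nonneg (‖u ω‖ - ‖v ω‖)]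

theorem Convex.integral_norm_sub_sq_le_of_forall_norm_sub_smul_le {s : Set E} (hs : Convex ℝ s)
    {X X' G : Ω → E} {x₀ : E} {γ : ℝ} (hX' : ∀ ω, X' ω ∈ s) (hx₀ : x₀ ∈ s)
    (hproj : ∀ ω, ∀ v ∈ s, ‖X' ω - (X ω - γ • G ω)‖ ≤ ‖v - (X ω - γ • G ω)‖)
    (hX'2 : Integrable (fun ω => ‖X' ω - x₀‖ ^ 2) P)
    (hX2 : Integrable (fun ω => ‖X ω - x₀‖ ^ 2) P)
    (hXG : Integrable (fun ω => ⟪X ω - x₀, G ω⟫) P) (hG2 : Integrable (fun ω => ‖G ω‖ ^ 2) P) :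
    ∫ ω, ‖X' ω - x₀‖ ^ 2 ∂P ≤ ∫ ω, ‖X ω - x₀‖ ^ 2 ∂P - 2 * γ * ∫ ω, ⟪X ω - x₀, G ω⟫ ∂P
      + γ ^ 2 * ∫ ω, ‖G ω‖ ^ 2 ∂P := by
  have hdiff : Integrable (fun ω => ‖X ω - x₀‖ ^ 2 - 2 * γ * ⟪X ω - x₀, G ω⟫) P :=
    hX2.sub (hXG.const_mul _)
  calc ∫ ω, ‖X' ω - x₀‖ ^ 2 ∂P
      ≤ ∫ ω, (‖X ω - x₀‖ ^ 2 - 2 * γ * ⟪X ω - x₀, G ω⟫ + γ ^ 2 * ‖G ω‖ ^ 2) ∂P :=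
        integral_mono hX'2 (hdiff.add (hG2.const_mul _)) fun ω =>
          hs.norm_sub_sq_le_of_forall_norm_sub_smul_le (hX' ω) hx₀ (hproj ω)
    _ = _ := by
        rw [integral_add hdiff (hG2.const_mul _), integral_sub hX2 (hXG.const_mul _),
          integral_const_mul, integral_const_mul]

theorem integral_le_integral_of_condExp_le {m : MeasurableSpace Ω} (hm : m ≤ mΩ)
    [SigmaFinite (P.trim hm)] {F h : Ω → ℝ} (hh : Integrable h P) (hle : P[F | m] ≤ᵐ[P] h) :
    ∫ ω, F ω ∂P ≤ ∫ ω, h ω ∂P := by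
  rw [← integral_condExp hm]
  exact integral_mono_ae integrable_condExp hh hle

variable [CompleteSpace E] [mE : MeasurableSpace E] [BorelSpace E] [SecondCountableTopology E]

theorem StrongConvexOn.mul_integral_norm_sub_sq_le_integral_inner [IsFiniteMeasure P]
    {s : Set E} {f : E → ℝ} {f' : E → E} {m : ℝ} {x₀ : E} (hf : StrongConvexOn s m f)
    (hgrad : ∀ x ∈ s, HasGradientAt f (f' x) x) (hx₀ : x₀ ∈ s) (hmin : IsMinOn f s x₀)
    {X G : Ω → E} (hXs : ∀ ω, X ω ∈ s) (hX : Measurable X) (hG : Integrable G P)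
    (hXG : Integrable (fun ω => ⟪X ω - x₀, G ω⟫) P)
    (hX2 : Integrable (fun ω => ‖X ω - x₀‖ ^ 2) P)
    (hcond : P[G | MeasurableSpace.comap X mE] =ᵐ[P] fun ω => f' (X ω)) :
    m / 2 * ∫ ω, ‖X ω - x₀‖ ^ 2 ∂P ≤ ∫ ω, ⟪X ω - x₀, G ω⟫ ∂P := by
  have hm := hX.comap_le
  have hY : StronglyMeasurable[MeasurableSpace.comap X mE] fun ω => X ω - x₀ :=
    ((measurable_id.sub_const x₀).comp (comap_measurable X)).stronglyMeasurable
  have hpull : P[fun ω => ⟪X ω - x₀, G ω⟫ | MeasurableSpace.comap X mE]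
      =ᵐ[P] fun ω => ⟪X ω - x₀, f' (X ω)⟫ := by
    filter_upwards [condExp_bilin_of_stronglyMeasurable_left (innerSL ℝ) hY hXG hG, hcond]
      with ω hpull hω
    rw [hω] at hpull
    exact hpull
  calc m / 2 * ∫ ω, ‖X ω - x₀‖ ^ 2 ∂P = ∫ ω, m / 2 * ‖X ω - x₀‖ ^ 2 ∂P :=
        (integral_const_mul _ _).symm
    _ ≤ ∫ ω, ⟪X ω - x₀, f' (X ω)⟫ ∂P :=
        integral_mono (hX2.const_mul _) (integrable_condExp.congr hpull) fun ω =>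
          hf.mul_norm_sub_sq_le_inner_of_isMinOn (hXs ω) hx₀ hmin (hgrad _ (hXs ω))
    _ = ∫ ω, (P[fun ω => ⟪X ω - x₀, G ω⟫ | MeasurableSpace.comap X mE]) ω ∂P :=
        integral_congr_ae hpull.symm
    _ = ∫ ω, ⟪X ω - x₀, G ω⟫ ∂P := integral_condExp hm

theorem StrongConvexOn.integral_norm_sub_sq_le_mul_add_of_sgd_step [IsProbabilityMeasure P]
    {s : Set E} {f : E → ℝ} {f' : E → E} {μ a b γ : ℝ} {x₀ : E} (hf : StrongConvexOn s μ f)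
    (hgrad : ∀ x ∈ s, HasGradientAt f (f' x) x) (hx₀ : x₀ ∈ s) (hmin : IsMinOn f s x₀)
    (hγ : 0 ≤ γ) (hγa : γ * a ≤ μ / 2) {X X' G : Ω → E} (hXs : ∀ ω, X ω ∈ s)
    (hX's : ∀ ω, X' ω ∈ s)
    (hproj : ∀ ω, ∀ v ∈ s, ‖X' ω - (X ω - γ • G ω)‖ ≤ ‖v - (X ω - γ • G ω)‖)
    (hX : Measurable X) (hG : Measurable G) (hGint : Integrable G P)
    (hG2 : Integrable (fun ω => ‖G ω‖ ^ 2) P) (hX2 : Integrable (fun ω => ‖X ω - x₀‖ ^ 2) P)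
    (hX'2 : Integrable (fun ω => ‖X' ω - x₀‖ ^ 2) P)
    (hcond : P[G | MeasurableSpace.comap X mE] =ᵐ[P] fun ω => f' (X ω))
    (hnoise : P[fun ω => ‖G ω‖ ^ 2 | MeasurableSpace.comap X mE]
      ≤ᵐ[P] fun ω => a * ‖X ω - x₀‖ ^ 2 + b) :
    ∫ ω, ‖X' ω - x₀‖ ^ 2 ∂P ≤ (1 - μ * γ / 2) * ∫ ω, ‖X ω - x₀‖ ^ 2 ∂P + γ ^ 2 * b := by
  have hXG := integrable_inner_of_integrable_norm_sq (hX.sub_const x₀).aestronglyMeasurable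
    hG.aestronglyMeasurable hX2 hG2
  have hdescent :=
    hf.1.integral_norm_sub_sq_le_of_forall_norm_sub_smul_le hX's hx₀ hproj hX'2 hX2 hXG hG2
  have hcorrelation :=
    hf.mul_integral_norm_sub_sq_le_integral_inner hgrad hx₀ hmin hXs hX hGint hXG hX2 hcond
  have hsecond := integral_le_integral_of_condExp_le hX.comap_le
    ((hX2.const_mul a).add (integrable_const b)) hnoise
  simp only [Pi.add_apply] at hsecond
  rw [integral_add (hX2.const_mul a) (integrable_const b), integral_const_mul,
    integral_const, probReal_univ, one_smul] at hsecond
  have hD : 0 ≤ ∫ ω, ‖X ω - x₀‖ ^ 2 ∂P := integral_nonneg fun ω => sq_nonneg _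
  nlinarith [mul_le_mul_of_nonneg_left hcorrelation (by positivity : (0 : ℝ) ≤ 2 * γ),
    mul_le_mul_of_nonneg_left hsecond (sq_nonneg γ),
    mul_le_mul_of_nonneg_left hγa (mul_nonneg hγ hD)]

end Expectation

theorem proj_sgd_strongly_convex_constant_stepsize_general
    {H : Type*} [NormedAddCommGroup H] [InnerProductSpace ℝ H]
    [FiniteDimensional ℝ H] [MeasurableSpace H] [BorelSpace H]
    {Ω : Type*} [MeasurableSpace Ω] (P : Measure Ω) [IsProbabilityMeasure P]
    (W : Set H) (f : H → ℝ) (f' : H → H)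
    (μ a b γ : ℝ) (wstar w0 : H)
    (w g : ℕ → Ω → H)
    (hμ : 0 < μ) (ha : 0 < a) (hb : 0 ≤ b)
    -- `W` is a nonempty closed convex set
    (hWconvex : Convex ℝ W)
    -- `f` is `μ`-strongly convex
    (hstrong : ConvexOn ℝ Set.univ (fun x => f x - μ / 2 * ‖x‖ ^ 2))
    -- `f` is differentiable on `W` with gradient `f'`
    (hgrad : ∀ x ∈ W, HasGradientAt f (f' x) x)
    -- `wstar` is the minimizer of `f` over `W`
    (hstarW : wstar ∈ W) (hmin : ∀ v ∈ W, f wstar ≤ f v)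
    -- stepsize
    (hγ0 : 0 < γ) (hγ : γ ≤ min (μ / (2 * a)) (2 / μ))
    -- deterministic initialization in `W`
    (hw0 : ∀ ω, w 0 ω = w0) (hw0W : w0 ∈ W)
    -- Proj-SGD iterates: `w (t+1) = proj_W (w t - γ • g t)`
    (hiterW : ∀ t ω, w (t + 1) ω ∈ W)
    (hiter : ∀ t ω, ∀ v ∈ W,
      ‖w (t + 1) ω - (w t ω - γ • g t ω)‖ ≤ ‖v - (w t ω - γ • g t ω)‖)
    -- measurability and integrability
    (hwmeas : ∀ t, Measurable (w t))
    (hgmeas : ∀ t, Measurable (g t))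
    (hgint : ∀ t, Integrable (g t) P)
    (hgsqint : ∀ t, Integrable (fun ω => ‖g t ω‖ ^ 2) P)
    (hwsqint : ∀ t, Integrable (fun ω => ‖w t ω - wstar‖ ^ 2) P)
    -- conditionally on `w t`, `g t` is an unbiased estimator of `∇ f (w t)` ...
    (hunbiased : ∀ t, P[g t | MeasurableSpace.comap (w t) ‹MeasurableSpace H›]
        =ᵐ[P] fun ω => f' (w t ω))
    -- ... whose expected squared norm is quadratically bounded with parameters `(a, b, wstar)`
    (hnoise : ∀ t, P[(fun ω => ‖g t ω‖ ^ 2) | MeasurableSpace.comap (w t) ‹MeasurableSpace H›]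
        ≤ᵐ[P] fun ω => a * ‖w t ω - wstar‖ ^ 2 + b) :
    ∀ T : ℕ, ∫ ω, ‖w T ω - wstar‖ ^ 2 ∂P
      ≤ (1 - μ * γ / 2) ^ T * ‖w0 - wstar‖ ^ 2 + 2 * γ * b / μ := by
  have hWt : ∀ t ω, w t ω ∈ W := by
    rintro (_ | t) ω
    exacts [hw0 ω ▸ hw0W, hiterW t ω]
  have hf : StrongConvexOn W μ f :=
    strongConvexOn_iff_convex.2 (hstrong.subset W.subset_univ hWconvex)
  have hγa : γ * a ≤ μ / 2 := by
    have := (le_div_iff₀ (by positivity)).1 (hγ.trans (min_le_left _ _))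
    linarith
  have hγμ : μ * γ / 2 ≤ 1 := by
    have := (le_div_iff₀ hμ).1 (hγ.trans (min_le_right _ _))
    linarith
  have hstep : ∀ t, ∫ ω, ‖w (t + 1) ω - wstar‖ ^ 2 ∂P
      ≤ (1 - μ * γ / 2) * ∫ ω, ‖w t ω - wstar‖ ^ 2 ∂P
        + (1 - (1 - μ * γ / 2)) * (2 * γ * b / μ) := fun t => by
    have hconst : (1 - (1 - μ * γ / 2)) * (2 * γ * b / μ) = γ ^ 2 * b := by
      field_simp
      ring
    rw [hconst]
    exact hf.integral_norm_sub_sq_le_mul_add_of_sgd_step hgrad hstarW hmin hγ0.le hγa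
      (hWt t) (hiterW t) (hiter t) (hwmeas t) (hgmeas t) (hgint t) (hgsqint t) (hwsqint t)
      (hwsqint (t + 1)) (hunbiased t) (hnoise t)
  intro T
  have hq : 0 ≤ 1 - μ * γ / 2 := by linarith
  have hr : 0 ≤ 2 * γ * b / μ := by positivity
  simpa [hw0] using le_pow_mul_add_of_le_mul_add
    (u := fun t => ∫ ω, ‖w t ω - wstar‖ ^ 2 ∂P) hq hr hstep T

/-- **Proj-SGD, strongly convex case, constant stepsize.**
If `W` is nonempty closed convex, `f` is `μ`-strongly convex and differentiable on `W` with
minimizer `wstar` over `W`, and Proj-SGD is run with constant stepsize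
`γ ∈ (0, min (μ/(2a)) (2/μ)]` with gradient estimators that, conditionally on `w t`, are
quadratically bounded for `∇ f` with parameters `(a, b, wstar)`, then
`E‖w T − wstar‖² ≤ (1 − μγ/2)^T ‖w 0 − wstar‖² + 2γb/μ`. -/
theorem proj_sgd_strongly_convex_constant_stepsize
    {H : Type*} [NormedAddCommGroup H] [InnerProductSpace ℝ H]
    [FiniteDimensional ℝ H] [MeasurableSpace H] [BorelSpace H]
    {Ω : Type*} [MeasurableSpace Ω] (P : Measure Ω) [IsProbabilityMeasure P]
    (W : Set H) (f : H → ℝ) (f' : H → H)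
    (μ a b γ : ℝ) (wstar w0 : H)
    (w g : ℕ → Ω → H)
    (hμ : 0 < μ) (ha : 0 < a) (hb : 0 ≤ b)
    -- `W` is a nonempty closed convex set
    (hWne : W.Nonempty) (hWclosed : IsClosed W) (hWconvex : Convex ℝ W)
    -- `f` is `μ`-strongly convex
    (hstrong : ConvexOn ℝ Set.univ (fun x => f x - μ / 2 * ‖x‖ ^ 2))
    -- `f` is differentiable on `W` with gradient `f'`
    (hgrad : ∀ x ∈ W, HasGradientAt f (f' x) x)
    -- `wstar` is the minimizer of `f` over `W`
    (hstarW : wstar ∈ W) (hmin : ∀ v ∈ W, f wstar ≤ f v)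
    -- stepsize
    (hγ0 : 0 < γ) (hγ : γ ≤ min (μ / (2 * a)) (2 / μ))
    -- deterministic initialization in `W`
    (hw0 : ∀ ω, w 0 ω = w0) (hw0W : w0 ∈ W)
    -- Proj-SGD iterates: `w (t+1) = proj_W (w t - γ • g t)`
    (hiterW : ∀ t ω, w (t + 1) ω ∈ W)
    (hiter : ∀ t ω, ∀ v ∈ W,
      ‖w (t + 1) ω - (w t ω - γ • g t ω)‖ ≤ ‖v - (w t ω - γ • g t ω)‖)
    -- measurability and integrability
    (hwmeas : ∀ t, Measurable (w t))
    (hgmeas : ∀ t, Measurable (g t))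
    (hgint : ∀ t, Integrable (g t) P)
    (hgsqint : ∀ t, Integrable (fun ω => ‖g t ω‖ ^ 2) P)
    (hwsqint : ∀ t, Integrable (fun ω => ‖w t ω - wstar‖ ^ 2) P)
    -- conditionally on `w t`, `g t` is an unbiased estimator of `∇ f (w t)` ...
    (hunbiased : ∀ t, P[g t | MeasurableSpace.comap (w t) ‹MeasurableSpace H›]
        =ᵐ[P] fun ω => f' (w t ω))
    -- ... whose expected squared norm is quadratically bounded with parameters `(a, b, wstar)`
    (hnoise : ∀ t, P[(fun ω => ‖g t ω‖ ^ 2) | MeasurableSpace.comap (w t) ‹MeasurableSpace H›]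
        ≤ᵐ[P] fun ω => a * ‖w t ω - wstar‖ ^ 2 + b) :
    ∀ T : ℕ, ∫ ω, ‖w T ω - wstar‖ ^ 2 ∂P
      ≤ (1 - μ * γ / 2) ^ T * ‖w0 - wstar‖ ^ 2 + 2 * γ * b / μ :=
  proj_sgd_strongly_convex_constant_stepsize_general P W f f' μ a b γ wstar w0 w g hμ ha hb hWconvex
    hstrong hgrad hstarW hmin hγ0 hγ hw0 hw0W hiterW hiter hwmeas hgmeas hgint hgsqint hwsqint
    hunbiased hnoise
end

section
/- Let V be a linear subspace of the d×d real matrices and for w = (m, C) ∈ ℝ^d × V let T_w(u) = Cu + m. Suppose the map z ↦ log p(z, x) on ℝ^d is differentiable and M-smooth, with maximizer m̄; set w̄ = (m̄, 0). Define the entropy gradient estimator g_ent(u) = −∇_w log p(T_w(u), x) + ∇h(w), where h(m, C) = −log det C on {C positive definite} and ∇h(w) = (0, −proj_V(C^{−⊤})). Then for every L > 0, every w = (m, C) with C positive definite and σ_min(C) ≥ 1/√L, and every w* ∈ ℝ^d × V, E_{u ~ N(0,I_d)} ‖g_ent(u)‖² ≤ 2(d+3)M²‖w − w̄‖² + 2dL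 ≤ 4(d+3)M²‖w − w*‖² + 4(d+3)M²‖w* − w̄‖² + 2dL. -/
open MeasureTheory ProbabilityTheory

noncomputable section

/-- The standard Gaussian measure `N(0, I_d)` on `ℝ^d` (as `EuclideanSpace ℝ (Fin d)`). -/
def stdGaussian (d : ℕ) : Measure (EuclideanSpace ℝ (Fin d)) :=
  Measure.map (MeasurableEquiv.toLp 2 (Fin d → ℝ))
    (Measure.pi fun _ : Fin d => gaussianReal 0 1)

/-- View an element of the Euclidean space indexed by `Fin d × Fin d` as a matrix. -/
def toMat {d : ℕ} (C : EuclideanSpace ℝ (Fin d × Fin d)) : Matrix (Fin d) (Fin d) ℝ :=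
  Matrix.of fun i j => C (i, j)

/-- View a matrix as an element of the Euclidean space indexed by `Fin d × Fin d`
(carrying the Frobenius inner product). -/
def ofMat {d : ℕ} (A : Matrix (Fin d) (Fin d) ℝ) : EuclideanSpace ℝ (Fin d × Fin d) :=
  WithLp.toLp 2 fun p : Fin d × Fin d => A p.1 p.2

/-- The action of a matrix on `EuclideanSpace ℝ (Fin d)`. -/
def mulVecE {d : ℕ} (A : Matrix (Fin d) (Fin d) ℝ) (v : EuclideanSpace ℝ (Fin d)) :
    EuclideanSpace ℝ (Fin d) :=
  WithLp.toLp 2 fun i => ∑ j, A i j * v j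

/-- The affine reparameterization `T_w(u) = C u + m` for `w = (m, C) ∈ ℝ^d × V`. -/
def repar {d : ℕ} (V : Submodule ℝ (EuclideanSpace ℝ (Fin d × Fin d)))
    (w : WithLp 2 (EuclideanSpace ℝ (Fin d) × V))
    (u : EuclideanSpace ℝ (Fin d)) : EuclideanSpace ℝ (Fin d) :=
  WithLp.toLp 2 fun i => (∑ j, (w.ofLp.2 : EuclideanSpace ℝ (Fin d × Fin d)) (i, j) * u j) + w.ofLp.1 i

/-- The gradient of the negative entropy, `∇h(w) = (0, −proj_V (C⁻ᵀ))`,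
for `w = (m, C) ∈ ℝ^d × V`. -/
def entGrad {d : ℕ} (V : Submodule ℝ (EuclideanSpace ℝ (Fin d × Fin d)))
    (w : WithLp 2 (EuclideanSpace ℝ (Fin d) × V)) :
    WithLp 2 (EuclideanSpace ℝ (Fin d) × V) :=
  WithLp.toLp 2 ((0, -(V.orthogonalProjectionOnto
      (ofMat (((toMat (w.ofLp.2 : EuclideanSpace ℝ (Fin d × Fin d))).transpose)⁻¹)))) :
    EuclideanSpace ℝ (Fin d) × V)

/-!
The gradient of `w ↦ -log p(T_w u)` is `-(g, proj_V (g uᵀ))` with `g = ∇ log p(T_w u)`, because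
`⟪g uᵀ, C'⟫ = ⟪g, C' u⟫`. Hence `‖g_ent(u)‖² ≤ ‖g‖² (1 + 2‖u‖²) + 2‖C⁻ᵀ‖²`, where
`‖g‖ ≤ M ‖C u + m - m̄‖` by smoothness and `∇ log p(m̄) = 0`, and `‖C⁻ᵀ‖² ≤ d L` because every
column of `C⁻¹` has norm at most `√L`.

Writing `‖C u + δ‖² = ∑ᵢ (⟪cᵢ, u⟫ + δᵢ)²` over the rows `cᵢ` of `C`, the expectation reduces to the
Gaussian moments `E ⟪a, u⟫² = ‖a‖²` and `E ⟪a, u⟫² ⟪b, u⟫² = ‖a‖² ‖b‖² + 2 ⟪a, b⟫²`. The latter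
follows by polarization from `E ⟪a, u⟫⁴ = 3 ‖a‖⁴`, read off the moment generating function of
`⟪a, u⟫ ~ N(0, ‖a‖²)`; odd terms vanish by the symmetry `u ↦ -u`. Altogether
`E ‖g_ent‖² ≤ M² ((2d + 5) ‖C‖² + (2d + 1) ‖δ‖²) + 2 d L`.
-/

open scoped RealInnerProductSpace NNReal Matrix

section RealGaussian

open Real

lemma hasDerivAt_mul_exp_half_sq (v : ℝ) {p : ℝ → ℝ} {p' t : ℝ} (hp : HasDerivAt p p' t) :
    HasDerivAt (fun t => p t * exp (v * t ^ 2 / 2))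
      ((p' + v * t * p t) * exp (v * t ^ 2 / 2)) t := by
  have hq : HasDerivAt (fun t => v * t ^ 2 / 2) (v * t) t :=
    (((hasDerivAt_pow 2 t).const_mul v).div_const 2).congr_deriv (by push_cast; ring)
  exact (hp.fun_mul hq.exp).congr_deriv (by ring)

lemma iteratedDeriv_exp_half_sq (v : ℝ) :
    iteratedDeriv 2 (fun t => exp (v * t ^ 2 / 2)) 0 = v ∧
      iteratedDeriv 4 (fun t => exp (v * t ^ 2 / 2)) 0 = 3 * v ^ 2 := by
  set e := fun t : ℝ => exp (v * t ^ 2 / 2)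
  have step {p p' : ℝ → ℝ} (hp : ∀ t, HasDerivAt p (p' t) t) :
      deriv (fun t => p t * e t) = fun t => (p' t + v * t * p t) * e t :=
    funext fun t => (hasDerivAt_mul_exp_half_sq v (hp t)).deriv
  have d1 : deriv e = fun t => (v * t) * e t := by
    simpa using step (p := fun _ => 1) (p' := fun _ => 0) fun t => hasDerivAt_const t 1
  have d2 : deriv (fun t => (v * t) * e t) = fun t => (v + v ^ 2 * t ^ 2) * e t := by
    rw [step fun t => (hasDerivAt_id' t).const_mul v]
    ext t; ring
  have d3 : deriv (fun t => (v + v ^ 2 * t ^ 2) * e t)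
      = fun t => (3 * v ^ 2 * t + v ^ 3 * t ^ 3) * e t := by
    rw [step fun t => ((hasDerivAt_pow 2 t).const_mul (v ^ 2)).const_add v]
    ext t; push_cast; ring
  have d4 : deriv (fun t => (3 * v ^ 2 * t + v ^ 3 * t ^ 3) * e t) 0 = 3 * v ^ 2 := by
    rw [step fun t => ((hasDerivAt_id' t).const_mul (3 * v ^ 2)).fun_add
      ((hasDerivAt_pow 3 t).const_mul (v ^ 3))]
    simp [e]
  simp only [iteratedDeriv_succ, iteratedDeriv_zero, d1, d2, d3, d4]
  simp [e]

lemma integral_pow_gaussianReal_zero (v : ℝ≥0) (n : ℕ) :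
    ∫ x, x ^ n ∂gaussianReal 0 v = iteratedDeriv n (fun t => exp (v * t ^ 2 / 2)) 0 := by
  simpa [mgf_id_gaussianReal] using (iteratedDeriv_mgf_zero (X := id) (μ := gaussianReal 0 v)
    (by simp [integrableExpSet_id_gaussianReal]) n).symm


end RealGaussian

section StdGaussian

variable {E : Type*} [NormedAddCommGroup E] [InnerProductSpace ℝ E] [FiniteDimensional ℝ E]
  [MeasurableSpace E] [BorelSpace E]

lemma map_inner_stdGaussian (a : E) :
    (stdGaussian E).map (fun u => ⟪a, u⟫) = gaussianReal 0 (‖a‖₊ ^ 2) := by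
  have h := IsGaussian.map_eq_gaussianReal (μ := stdGaussian E) (innerSL ℝ a)
  simp only [integral_strongDual_stdGaussian, variance_dual_stdGaussian, innerSL_apply_norm] at h
  rw [← coe_nnnorm, ← NNReal.coe_pow, Real.toNNReal_coe] at h
  exact h

lemma integral_inner_pow_stdGaussian (a : E) (n : ℕ) :
    ∫ u, ⟪a, u⟫ ^ n ∂stdGaussian E
      = iteratedDeriv n (fun t => Real.exp (‖a‖ ^ 2 * t ^ 2 / 2)) 0 := by
  rw [← integral_map (f := fun x => x ^ n) (by fun_prop) (by fun_prop), map_inner_stdGaussian,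
    integral_pow_gaussianReal_zero]
  simp

lemma integral_inner_sq_stdGaussian (a : E) : ∫ u, ⟪a, u⟫ ^ 2 ∂stdGaussian E = ‖a‖ ^ 2 := by
  rw [integral_inner_pow_stdGaussian, (iteratedDeriv_exp_half_sq _).1]

lemma integral_inner_pow_four_stdGaussian (a : E) :
    ∫ u, ⟪a, u⟫ ^ 4 ∂stdGaussian E = 3 * ‖a‖ ^ 4 := by
  rw [integral_inner_pow_stdGaussian, (iteratedDeriv_exp_half_sq _).2]
  ring

lemma integral_eq_zero_of_odd_stdGaussian {f : E → ℝ} (hf : ∀ u, f (-u) = -f u) :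
    ∫ u, f u ∂stdGaussian E = 0 := by
  have h : ∫ u, f (-u) ∂stdGaussian E = ∫ u, f u ∂stdGaussian E := by
    conv_rhs => rw [← stdGaussian_map (LinearIsometryEquiv.neg ℝ (E := E))]
    exact ((LinearIsometryEquiv.neg ℝ (E := E)).toHomeomorph.measurableEmbedding.integral_map
      f).symm
  simp only [hf, integral_neg] at h
  linarith

lemma integrable_of_abs_le_norm_pow_stdGaussian {f : E → ℝ} (hf : Continuous f) (C : ℝ) (n : ℕ)
    (hfC : ∀ u, |f u| ≤ C * ‖u‖ ^ n) : Integrable f (stdGaussian E) :=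
  Integrable.mono' (((IsGaussian.memLp_id _ n (by simp)).integrable_norm_pow').const_mul C)
    hf.aestronglyMeasurable (ae_of_all _ fun u => by simpa using hfC u)

lemma integrable_inner_pow_mul_inner_pow_stdGaussian (a b : E) (i j : ℕ) :
    Integrable (fun u => ⟪a, u⟫ ^ i * ⟪b, u⟫ ^ j) (stdGaussian E) := by
  refine integrable_of_abs_le_norm_pow_stdGaussian (by fun_prop) (‖a‖ ^ i * ‖b‖ ^ j) (i + j)
    fun u => ?_
  rw [abs_mul, abs_pow, abs_pow, pow_add, mul_mul_mul_comm, ← mul_pow, ← mul_pow]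
  gcongr <;> exact abs_real_inner_le_norm _ _

lemma integrable_inner_pow_mul_norm_pow_stdGaussian (a : E) (i j : ℕ) :
    Integrable (fun u => ⟪a, u⟫ ^ i * ‖u‖ ^ j) (stdGaussian E) := by
  refine integrable_of_abs_le_norm_pow_stdGaussian (by fun_prop) (‖a‖ ^ i) (i + j) fun u => ?_
  rw [abs_mul, abs_pow, abs_pow, abs_norm, pow_add, ← mul_assoc, ← mul_pow]
  gcongr
  exact abs_real_inner_le_norm _ _

lemma integral_inner_sq_mul_inner_sq_stdGaussian (a b : E) :
    ∫ u, ⟪a, u⟫ ^ 2 * ⟪b, u⟫ ^ 2 ∂stdGaussian E = ‖a‖ ^ 2 * ‖b‖ ^ 2 + 2 * ⟪a, b⟫ ^ 2 := by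
  have hint (c : E) : Integrable (fun u => ⟪c, u⟫ ^ 4) (stdGaussian E) := by
    simpa using integrable_inner_pow_mul_inner_pow_stdGaussian c c 4 0
  calc ∫ u, ⟪a, u⟫ ^ 2 * ⟪b, u⟫ ^ 2 ∂stdGaussian E
      = ∫ u, (⟪a + b, u⟫ ^ 4 + ⟪a - b, u⟫ ^ 4 - 2 * (⟪a, u⟫ ^ 4 + ⟪b, u⟫ ^ 4)) / 12
          ∂stdGaussian E := by
        congr 1 with u
        rw [inner_add_left, inner_sub_left]
        ring
    _ = ‖a‖ ^ 2 * ‖b‖ ^ 2 + 2 * ⟪a, b⟫ ^ 2 := by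
        have hsum (c c' : E) : Integrable (fun u => ⟪c, u⟫ ^ 4 + ⟪c', u⟫ ^ 4) (stdGaussian E) :=
          (hint c).add (hint c')
        rw [integral_div, integral_sub (hsum _ _) ((hsum _ _).const_mul 2), integral_const_mul,
          integral_add (hint _) (hint _), integral_add (hint _) (hint _)]
        simp only [integral_inner_pow_four_stdGaussian]
        have h4 (c : E) : ‖c‖ ^ 4 = (‖c‖ ^ 2) ^ 2 := by ring
        rw [h4, h4, h4 a, h4 b, norm_add_sq_real, norm_sub_sq_real]
        ring

lemma integral_norm_sq_stdGaussian :
    ∫ u, ‖u‖ ^ 2 ∂stdGaussian E = Module.finrank ℝ E := by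
  let e := stdOrthonormalBasis ℝ E
  simp_rw [← e.sum_sq_inner_right]
  rw [integral_finsetSum _ fun l _ => by
    simpa using integrable_inner_pow_mul_inner_pow_stdGaussian (e l) (e l) 2 0]
  simp [integral_inner_sq_stdGaussian, e.orthonormal.1]

lemma integral_inner_sq_mul_norm_sq_stdGaussian (a : E) :
    ∫ u, ⟪a, u⟫ ^ 2 * ‖u‖ ^ 2 ∂stdGaussian E = (Module.finrank ℝ E + 2) * ‖a‖ ^ 2 := by
  let e := stdOrthonormalBasis ℝ E
  simp_rw [← e.sum_sq_inner_right, Finset.mul_sum]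
  rw [integral_finsetSum _ fun l _ => integrable_inner_pow_mul_inner_pow_stdGaussian a (e l) 2 2]
  simp only [integral_inner_sq_mul_inner_sq_stdGaussian, e.orthonormal.1, Finset.sum_add_distrib,
    ← Finset.mul_sum, e.sum_sq_inner_left, e.sum_sq_inner_right, one_pow, Finset.sum_const,
    Finset.card_univ, Fintype.card_fin, nsmul_eq_mul, mul_one]
  ring

lemma integrable_sq_inner_add_mul_stdGaussian (a : E) (s : ℝ) :
    Integrable (fun u => (⟪a, u⟫ + s) ^ 2 * (1 + 2 * ‖u‖ ^ 2)) (stdGaussian E) := by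
  have h (i j : ℕ) := integrable_inner_pow_mul_norm_pow_stdGaussian a i j
  -- expanded into the monomials `⟪a, u⟫ ^ i * ‖u‖ ^ j` of `h`, literally, for `fun_prop`
  have hexp : (fun u => (⟪a, u⟫ + s) ^ 2 * (1 + 2 * ‖u‖ ^ 2)) = fun u =>
      ⟪a, u⟫ ^ 2 * ‖u‖ ^ 0 + 2 * (⟪a, u⟫ ^ 2 * ‖u‖ ^ 2) + s ^ 2 * (⟪a, u⟫ ^ 0 * ‖u‖ ^ 0)
        + 2 * s ^ 2 * (⟪a, u⟫ ^ 0 * ‖u‖ ^ 2) + 2 * s * (⟪a, u⟫ ^ 1 * ‖u‖ ^ 0)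
        + 4 * s * (⟪a, u⟫ ^ 1 * ‖u‖ ^ 2) := by
    ext u; ring
  rw [hexp]
  fun_prop

lemma integral_sq_inner_add_mul_stdGaussian (a : E) (s : ℝ) :
    ∫ u, (⟪a, u⟫ + s) ^ 2 * (1 + 2 * ‖u‖ ^ 2) ∂stdGaussian E
      = (2 * Module.finrank ℝ E + 5) * ‖a‖ ^ 2 + (2 * Module.finrank ℝ E + 1) * s ^ 2 := by
  have h (i j : ℕ) := integrable_inner_pow_mul_norm_pow_stdGaussian a i j
  have hx2 : Integrable (fun u => ⟪a, u⟫ ^ 2) (stdGaussian E) := by simpa using h 2 0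
  have hN : Integrable (fun u => ‖u‖ ^ 2) (stdGaussian E) := by simpa using h 0 2
  have hx : Integrable (fun u => ⟪a, u⟫) (stdGaussian E) := by simpa using h 1 0
  have hxN : Integrable (fun u => ⟪a, u⟫ * ‖u‖ ^ 2) (stdGaussian E) := by simpa using h 1 2
  have hx2N := h 2 2
  have hodd : ∫ u, ⟪a, u⟫ + 2 * (⟪a, u⟫ * ‖u‖ ^ 2) ∂stdGaussian E = 0 :=
    integral_eq_zero_of_odd_stdGaussian fun u => by rw [inner_neg_right, norm_neg]; ring
  have hexp : (fun u => (⟪a, u⟫ + s) ^ 2 * (1 + 2 * ‖u‖ ^ 2)) = fun u =>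
      ⟪a, u⟫ ^ 2 + 2 * (⟪a, u⟫ ^ 2 * ‖u‖ ^ 2) + s ^ 2 * (1 + 2 * ‖u‖ ^ 2)
        + 2 * s * (⟪a, u⟫ + 2 * (⟪a, u⟫ * ‖u‖ ^ 2)) := by
    ext u; ring
  rw [hexp, integral_add (by fun_prop) (by fun_prop), integral_add (by fun_prop) (by fun_prop),
    integral_add (by fun_prop) (by fun_prop), integral_const_mul, integral_const_mul,
    integral_const_mul, integral_add (by fun_prop) (by fun_prop), integral_const_mul, hodd,
    integral_inner_sq_stdGaussian, integral_inner_sq_mul_norm_sq_stdGaussian,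
    integral_norm_sq_stdGaussian, integral_const, probReal_univ, smul_eq_mul, mul_one, mul_zero,
    add_zero]
  ring

end StdGaussian

section Repar

variable {d : ℕ} (V : Submodule ℝ (EuclideanSpace ℝ (Fin d × Fin d)))

lemma repar_eq (w : WithLp 2 (EuclideanSpace ℝ (Fin d) × V)) (u : EuclideanSpace ℝ (Fin d)) :
    repar V w u = mulVecE (toMat (w.ofLp.2 : EuclideanSpace ℝ (Fin d × Fin d))) u + w.ofLp.1 := rfl

lemma inner_ofMat_vecMulVec (g u : EuclideanSpace ℝ (Fin d))
    (C : EuclideanSpace ℝ (Fin d × Fin d)) :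
    ⟪ofMat (Matrix.vecMulVec g u), C⟫ = ⟪g, mulVecE (toMat C) u⟫ := by
  simp only [ofMat, mulVecE, toMat, PiLp.inner_apply, Fintype.sum_prod_type, Matrix.vecMulVec_apply,
    Matrix.of_apply, RCLike.inner_apply, conj_trivial, Finset.sum_mul]
  exact Finset.sum_congr rfl fun i _ => Finset.sum_congr rfl fun j _ => by ring

lemma norm_ofMat_vecMulVec (g u : EuclideanSpace ℝ (Fin d)) :
    ‖ofMat (Matrix.vecMulVec g u)‖ = ‖g‖ * ‖u‖ := by
  rw [← sq_eq_sq₀ (norm_nonneg _) (by positivity), mul_pow, EuclideanSpace.real_norm_sq_eq,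
    EuclideanSpace.real_norm_sq_eq, EuclideanSpace.real_norm_sq_eq, Fintype.sum_prod_type,
    Finset.sum_mul_sum]
  simp [ofMat, Matrix.vecMulVec_apply, mul_pow]

def reparCLM (u : EuclideanSpace ℝ (Fin d)) :
    WithLp 2 (EuclideanSpace ℝ (Fin d) × V) →L[ℝ] EuclideanSpace ℝ (Fin d) :=
  LinearMap.toContinuousLinearMap
    { toFun := fun w => repar V w u
      map_add' := fun a b => by
        ext i
        simp only [repar, WithLp.ofLp_add, Prod.fst_add, Prod.snd_add, Submodule.coe_add,
          PiLp.add_apply, add_mul, Finset.sum_add_distrib]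
        ring
      map_smul' := fun c a => by
        ext i
        simp [repar, mul_add, Finset.mul_sum, mul_assoc] }

lemma hasGradientAt_comp_repar {f : EuclideanSpace ℝ (Fin d) → ℝ} {g : EuclideanSpace ℝ (Fin d)}
    {w : WithLp 2 (EuclideanSpace ℝ (Fin d) × V)} {u : EuclideanSpace ℝ (Fin d)}
    (hf : HasGradientAt f g (repar V w u)) :
    HasGradientAt (fun w' => f (repar V w' u))
      (WithLp.toLp 2 (g, V.orthogonalProjectionOnto (ofMat (Matrix.vecMulVec g u)))) w := by
  rw [hasGradientAt_iff_hasFDerivAt] at hf ⊢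
  refine (hf.comp w (reparCLM V u).hasFDerivAt).congr_fderiv ?_
  ext y
  simp only [ContinuousLinearMap.comp_apply, reparCLM, LinearMap.coe_toContinuousLinearMap',
    LinearMap.coe_mk, AddHom.coe_mk, InnerProductSpace.toDual_apply_apply, repar_eq,
    WithLp.prod_inner_apply, inner_add_right, inner_ofMat_vecMulVec,
    Submodule.inner_orthogonalProjectionOnto_eq_of_mem_right]
  ring

lemma norm_sq_gradient_comp_repar_add_entGrad_le {f : EuclideanSpace ℝ (Fin d) → ℝ}
    {g : EuclideanSpace ℝ (Fin d)} {w : WithLp 2 (EuclideanSpace ℝ (Fin d) × V)}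
    {u : EuclideanSpace ℝ (Fin d)} (hf : HasGradientAt f g (repar V w u)) :
    ‖gradient (fun w' => f (repar V w' u)) w + entGrad V w‖ ^ 2
      ≤ ‖g‖ ^ 2 * (1 + 2 * ‖u‖ ^ 2)
        + 2 * ‖ofMat (toMat (w.ofLp.2 : EuclideanSpace ℝ (Fin d × Fin d)))ᵀ⁻¹‖ ^ 2 := by
  set B := ofMat (toMat (w.ofLp.2 : EuclideanSpace ℝ (Fin d × Fin d)))ᵀ⁻¹
  have hsnd : ‖V.orthogonalProjectionOnto (ofMat (Matrix.vecMulVec g u) - B)‖ ≤ ‖g‖ * ‖u‖ + ‖B‖ :=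
    calc _ ≤ ‖ofMat (Matrix.vecMulVec g u) - B‖ := V.norm_orthogonalProjectionOnto_apply_le _
      _ ≤ ‖g‖ * ‖u‖ + ‖B‖ := by rw [← norm_ofMat_vecMulVec]; exact norm_sub_le _ _
  have hG : gradient (fun w' => f (repar V w' u)) w + entGrad V w
      = WithLp.toLp 2 (g, V.orthogonalProjectionOnto (ofMat (Matrix.vecMulVec g u) - B)) := by
    rw [(hasGradientAt_comp_repar V hf).gradient, entGrad, ← WithLp.toLp_add, Prod.mk_add_mk,
      add_zero, map_sub, sub_eq_add_neg]
  rw [hG, WithLp.prod_norm_sq_eq_of_L2]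
  have := (pow_le_pow_left₀ (norm_nonneg _) hsnd 2).trans add_sq_le
  rw [mul_pow] at this
  simp only [WithLp.toLp_fst, WithLp.toLp_snd]
  linarith

end Repar

section InverseBound

variable {d : ℕ}

lemma mulVecE_mulVecE (A B : Matrix (Fin d) (Fin d) ℝ) (v : EuclideanSpace ℝ (Fin d)) :
    mulVecE A (mulVecE B v) = mulVecE (A * B) v := by
  simp only [mulVecE]
  exact congrArg (WithLp.toLp 2) (Matrix.mulVec_mulVec v.ofLp A B)

lemma mulVecE_one (v : EuclideanSpace ℝ (Fin d)) : mulVecE 1 v = v :=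
  congrArg (WithLp.toLp 2) (Matrix.one_mulVec v.ofLp)

lemma isUnit_of_le_norm_mulVecE {C : Matrix (Fin d) (Fin d) ℝ} {c : ℝ} (hc : 0 < c)
    (hC : ∀ v, c * ‖v‖ ≤ ‖mulVecE C v‖) : IsUnit C := by
  refine Matrix.mulVec_injective_iff_isUnit.1 fun x y hxy => ?_
  have h := hC (WithLp.toLp 2 (x - y))
  have h0 : mulVecE C (WithLp.toLp 2 (x - y)) = 0 :=
    congrArg (WithLp.toLp 2) ((Matrix.mulVec_sub C x y).trans (sub_eq_zero.2 hxy))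
  rw [h0, norm_zero] at h
  have := norm_eq_zero.1 (le_antisymm (nonpos_of_mul_nonpos_right h hc) (norm_nonneg _))
  simpa [sub_eq_zero] using this

lemma norm_sq_ofMat_transpose_inv_le {C : Matrix (Fin d) (Fin d) ℝ} {L : ℝ} (hL : 0 < L)
    (hC : ∀ v, 1 / √L * ‖v‖ ≤ ‖mulVecE C v‖) : ‖ofMat Cᵀ⁻¹‖ ^ 2 ≤ d * L := by
  have hunit := (Matrix.isUnit_iff_isUnit_det C).1 (isUnit_of_le_norm_mulVecE (by positivity) hC)
  have hinv (v) : ‖mulVecE C⁻¹ v‖ ≤ √L * ‖v‖ := by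
    have h := hC (mulVecE C⁻¹ v)
    rwa [mulVecE_mulVecE, Matrix.mul_nonsing_inv _ hunit, mulVecE_one, one_div_mul_eq_div,
      div_le_iff₀ (by positivity), mul_comm] at h
  have hcol (i : Fin d) : ‖mulVecE C⁻¹ (EuclideanSpace.single i 1)‖ ^ 2 ≤ L := by
    calc _ ≤ (√L * ‖EuclideanSpace.single i (1 : ℝ)‖) ^ 2 := by gcongr; exact hinv _
      _ = L := by simp [Real.sq_sqrt hL.le]
  calc ‖ofMat Cᵀ⁻¹‖ ^ 2 = ∑ i, ‖mulVecE C⁻¹ (EuclideanSpace.single i 1)‖ ^ 2 := by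
        simp [EuclideanSpace.real_norm_sq_eq, Fintype.sum_prod_type, ofMat, mulVecE,
          ← Matrix.transpose_nonsing_inv]
    _ ≤ ∑ _i : Fin d, L := Finset.sum_le_sum fun i _ => hcol i
    _ = d * L := by simp

end InverseBound

lemma IsLocalMax.hasGradientAt_eq_zero {F : Type*} [NormedAddCommGroup F] [InnerProductSpace ℝ F]
    [CompleteSpace F] {f : F → ℝ} {g x : F} (h : IsLocalMax f x) (hf : HasGradientAt f g x) :
    g = 0 := by
  simpa using h.hasFDerivAt_eq_zero (hasGradientAt_iff_hasFDerivAt.1 hf)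

lemma HasGradientAt.fun_neg {F : Type*} [NormedAddCommGroup F] [InnerProductSpace ℝ F]
    [CompleteSpace F] {f : F → ℝ} {g x : F} (hf : HasGradientAt f g x) :
    HasGradientAt (fun x => -f x) (-g) x := by
  rw [hasGradientAt_iff_hasFDerivAt, map_neg]
  exact (hasGradientAt_iff_hasFDerivAt.1 hf).fun_neg

section EntropyEstimator

variable {d : ℕ} (V : Submodule ℝ (EuclideanSpace ℝ (Fin d × Fin d)))

lemma stdGaussian_eq (d : ℕ) :
    stdGaussian d = ProbabilityTheory.stdGaussian (EuclideanSpace ℝ (Fin d)) :=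
  map_pi_eq_stdGaussian

instance (d : ℕ) : IsProbabilityMeasure (stdGaussian d) :=
  stdGaussian_eq d ▸ inferInstance

lemma norm_sq_mulVecE_add (C : EuclideanSpace ℝ (Fin d × Fin d)) (u b : EuclideanSpace ℝ (Fin d)) :
    ‖mulVecE (toMat C) u + b‖ ^ 2 = ∑ i, (⟪WithLp.toLp 2 (toMat C i), u⟫ + b i) ^ 2 := by
  simp [EuclideanSpace.real_norm_sq_eq, mulVecE, toMat, PiLp.inner_apply, mul_comm]

lemma sum_norm_sq_toLp_toMat (C : EuclideanSpace ℝ (Fin d × Fin d)) :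
    ∑ i, ‖(WithLp.toLp 2 (toMat C i) : EuclideanSpace ℝ (Fin d))‖ ^ 2 = ‖C‖ ^ 2 := by
  simp [EuclideanSpace.real_norm_sq_eq, toMat, Fintype.sum_prod_type]

lemma integrable_norm_sq_repar_sub_mul_stdGaussian (w : WithLp 2 (EuclideanSpace ℝ (Fin d) × V))
    (m : EuclideanSpace ℝ (Fin d)) :
    Integrable (fun u => ‖repar V w u - m‖ ^ 2 * (1 + 2 * ‖u‖ ^ 2)) (stdGaussian d) := by
  simp_rw [stdGaussian_eq, repar_eq, add_sub_assoc, norm_sq_mulVecE_add, Finset.sum_mul]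
  exact integrable_finsetSum _ fun i _ => integrable_sq_inner_add_mul_stdGaussian _ _

lemma integral_norm_sq_repar_sub_mul_stdGaussian (w : WithLp 2 (EuclideanSpace ℝ (Fin d) × V))
    (m : EuclideanSpace ℝ (Fin d)) :
    ∫ u, ‖repar V w u - m‖ ^ 2 * (1 + 2 * ‖u‖ ^ 2) ∂stdGaussian d
      = (2 * d + 5) * ‖(w.ofLp.2 : EuclideanSpace ℝ (Fin d × Fin d))‖ ^ 2
        + (2 * d + 1) * ‖w.ofLp.1 - m‖ ^ 2 := by
  simp_rw [stdGaussian_eq, repar_eq, add_sub_assoc, norm_sq_mulVecE_add, Finset.sum_mul]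
  rw [integral_finsetSum _ fun i _ => integrable_sq_inner_add_mul_stdGaussian _ _]
  simp only [integral_sq_inner_add_mul_stdGaussian, finrank_euclideanSpace_fin]
  rw [Finset.sum_add_distrib, ← Finset.mul_sum, ← Finset.mul_sum, sum_norm_sq_toLp_toMat,
    ← EuclideanSpace.real_norm_sq_eq]

lemma norm_sq_gradient_neg_comp_repar_add_entGrad_le {logp : EuclideanSpace ℝ (Fin d) → ℝ}
    {g m : EuclideanSpace ℝ (Fin d)} {w : WithLp 2 (EuclideanSpace ℝ (Fin d) × V)}
    {u : EuclideanSpace ℝ (Fin d)} {M L : ℝ} (hL : 0 < L)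
    (hf : HasGradientAt logp g (repar V w u)) (hg : ‖g‖ ≤ M * ‖repar V w u - m‖)
    (hC : ∀ v, 1 / √L * ‖v‖ ≤ ‖mulVecE (toMat (w.ofLp.2 : EuclideanSpace ℝ (Fin d × Fin d))) v‖) :
    ‖gradient (fun w' => -logp (repar V w' u)) w + entGrad V w‖ ^ 2
      ≤ M ^ 2 * (‖repar V w u - m‖ ^ 2 * (1 + 2 * ‖u‖ ^ 2)) + 2 * (d * L) := by
  calc _ ≤ ‖-g‖ ^ 2 * (1 + 2 * ‖u‖ ^ 2)
        + 2 * ‖ofMat (toMat (w.ofLp.2 : EuclideanSpace ℝ (Fin d × Fin d)))ᵀ⁻¹‖ ^ 2 :=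
        norm_sq_gradient_comp_repar_add_entGrad_le V hf.fun_neg
    _ ≤ (M * ‖repar V w u - m‖) ^ 2 * (1 + 2 * ‖u‖ ^ 2) + 2 * (d * L) := by
        rw [norm_neg]
        gcongr
        exact norm_sq_ofMat_transpose_inv_le hL hC
    _ = _ := by ring

end EntropyEstimator

theorem entropy_estimator_noise_bound_general
    (d : ℕ) (M L : ℝ) (hL : 0 < L)
    (V : Submodule ℝ (EuclideanSpace ℝ (Fin d × Fin d)))
    (logp : EuclideanSpace ℝ (Fin d) → ℝ)
    (glp : EuclideanSpace ℝ (Fin d) → EuclideanSpace ℝ (Fin d))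
    -- `log p(·, x)` is differentiable with gradient `glp` and `M`-smooth
    (hdiff : ∀ z, HasGradientAt logp (glp z) z)
    (hsmooth : ∀ z z', ‖glp z - glp z'‖ ≤ M * ‖z - z'‖)
    -- `log p(·, x)` is maximal at `m̄`, and `w̄ = (m̄, 0)`
    (mbar : EuclideanSpace ℝ (Fin d)) (hmax : ∀ z, logp z ≤ logp mbar)
    (wbar : WithLp 2 (EuclideanSpace ℝ (Fin d) × V))
    (hwbar : wbar = WithLp.toLp 2 ((mbar, 0) : EuclideanSpace ℝ (Fin d) × V))
    (w wstar : WithLp 2 (EuclideanSpace ℝ (Fin d) × V))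
    -- `w ∈ 𝒲_L` : the covariance factor `C` is positive definite with `σ_min(C) ≥ 1/√L`
    (hCsig : ∀ v : EuclideanSpace ℝ (Fin d),
      1 / Real.sqrt L * ‖v‖ ≤ ‖mulVecE (toMat (w.ofLp.2 : EuclideanSpace ℝ (Fin d × Fin d))) v‖) :
    (∫ u, ‖gradient (fun w' => -(logp (repar V w' u))) w + entGrad V w‖ ^ 2 ∂(stdGaussian d)
        ≤ 2 * ((d : ℝ) + 3) * M ^ 2 * ‖w - wbar‖ ^ 2 + 2 * d * L)
    ∧ 2 * ((d : ℝ) + 3) * M ^ 2 * ‖w - wbar‖ ^ 2 + 2 * d * L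
        ≤ 4 * ((d : ℝ) + 3) * M ^ 2 * ‖w - wstar‖ ^ 2
          + 4 * ((d : ℝ) + 3) * M ^ 2 * ‖wstar - wbar‖ ^ 2 + 2 * d * L := by
  have hcrit : glp mbar = 0 := IsLocalMax.hasGradientAt_eq_zero (.of_forall hmax) (hdiff mbar)
  have hpt (u) := norm_sq_gradient_neg_comp_repar_add_entGrad_le V hL (hdiff (repar V w u))
    (by simpa [hcrit] using hsmooth (repar V w u) mbar) hCsig
  have hint := (integrable_norm_sq_repar_sub_mul_stdGaussian V w mbar).const_mul (M ^ 2)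
  have hnorm : ‖w - wbar‖ ^ 2
      = ‖w.ofLp.1 - mbar‖ ^ 2 + ‖(w.ofLp.2 : EuclideanSpace ℝ (Fin d × Fin d))‖ ^ 2 := by
    subst hwbar
    rw [WithLp.prod_norm_sq_eq_of_L2]
    simp
  refine ⟨?_, ?_⟩
  · calc _ ≤ ∫ u, M ^ 2 * (‖repar V w u - mbar‖ ^ 2 * (1 + 2 * ‖u‖ ^ 2)) + 2 * (d * L)
          ∂stdGaussian d :=
          integral_mono_of_nonneg (.of_forall fun _ => by positivity)
            (hint.add (integrable_const _)) (.of_forall hpt)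
      _ = M ^ 2 * ((2 * d + 5) * ‖(w.ofLp.2 : EuclideanSpace ℝ (Fin d × Fin d))‖ ^ 2
            + (2 * d + 1) * ‖w.ofLp.1 - mbar‖ ^ 2) + 2 * (d * L) := by
          rw [integral_add hint (integrable_const _), integral_const_mul,
            integral_norm_sq_repar_sub_mul_stdGaussian]
          simp
      _ ≤ _ := by
          rw [hnorm]
          nlinarith [sq_nonneg M]
  · have h := (pow_le_pow_left₀ (norm_nonneg _) (norm_sub_le_norm_sub_add_norm_sub w wstar wbar)
      2).trans add_sq_le
    have := mul_le_mul_of_nonneg_left h (by positivity : 0 ≤ 2 * ((d : ℝ) + 3) * M ^ 2)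
    linarith

/-- **Noise bound for the entropy gradient estimator.**
If `z ↦ log p(z, x)` is differentiable, `M`-smooth and maximal at `m̄`, then for every
`L > 0`, every `w = (m, C) ∈ ℝ^d × V` with `C ≻ 0` and `σ_min(C) ≥ 1/√L`, and every `w*`,
the estimator `g_ent(u) = −∇_w log p(T_w(u), x) + ∇h(w)` with `u ~ N(0, I_d)` satisfies
`E‖g_ent‖² ≤ 2(d+3)M²‖w − w̄‖² + 2dL ≤ 4(d+3)M²‖w − w*‖² + 4(d+3)M²‖w* − w̄‖² + 2dL`,
where `w̄ = (m̄, 0)`. -/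
theorem entropy_estimator_noise_bound
    (d : ℕ) (M L : ℝ) (hM : 0 < M) (hL : 0 < L)
    (V : Submodule ℝ (EuclideanSpace ℝ (Fin d × Fin d)))
    (logp : EuclideanSpace ℝ (Fin d) → ℝ)
    (glp : EuclideanSpace ℝ (Fin d) → EuclideanSpace ℝ (Fin d))
    -- `log p(·, x)` is differentiable with gradient `glp` and `M`-smooth
    (hdiff : ∀ z, HasGradientAt logp (glp z) z)
    (hsmooth : ∀ z z', ‖glp z - glp z'‖ ≤ M * ‖z - z'‖)
    -- `log p(·, x)` is maximal at `m̄`, and `w̄ = (m̄, 0)`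
    (mbar : EuclideanSpace ℝ (Fin d)) (hmax : ∀ z, logp z ≤ logp mbar)
    (wbar : WithLp 2 (EuclideanSpace ℝ (Fin d) × V))
    (hwbar : wbar = WithLp.toLp 2 ((mbar, 0) : EuclideanSpace ℝ (Fin d) × V))
    (w wstar : WithLp 2 (EuclideanSpace ℝ (Fin d) × V))
    -- `w ∈ 𝒲_L` : the covariance factor `C` is positive definite with `σ_min(C) ≥ 1/√L`
    (hCpos : (toMat (w.ofLp.2 : EuclideanSpace ℝ (Fin d × Fin d))).PosDef)
    (hCsig : ∀ v : EuclideanSpace ℝ (Fin d),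
      1 / Real.sqrt L * ‖v‖ ≤ ‖mulVecE (toMat (w.ofLp.2 : EuclideanSpace ℝ (Fin d × Fin d))) v‖) :
    (∫ u, ‖gradient (fun w' => -(logp (repar V w' u))) w + entGrad V w‖ ^ 2 ∂(stdGaussian d)
        ≤ 2 * ((d : ℝ) + 3) * M ^ 2 * ‖w - wbar‖ ^ 2 + 2 * d * L)
    ∧ 2 * ((d : ℝ) + 3) * M ^ 2 * ‖w - wbar‖ ^ 2 + 2 * d * L
        ≤ 4 * ((d : ℝ) + 3) * M ^ 2 * ‖w - wstar‖ ^ 2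
          + 4 * ((d : ℝ) + 3) * M ^ 2 * ‖wstar - wbar‖ ^ 2 + 2 * d * L :=
  entropy_estimator_noise_bound_general d M L hL V logp glp hdiff hsmooth mbar hmax wbar hwbar w
    wstar hCsig
end
end

section
/- Let 𝒯^d be the space of d×d lower-triangular real matrices and define h : ℝ^d × 𝒯^d → ℝ ∪ {+∞} by h(m, C) = −log det C if all diagonal entries of C are positive, and +∞ otherwise. Then for every γ > 0 and every (m, C) ∈ ℝ^d × 𝒯^d, prox_{γh}(m, C) = (m, Ĉ), where Ĉ_{ii} = (C_{ii} + √(C_{ii}² + 4γ))/2 for every i and Ĉ_{ij} = C_{ij} for i ≠ j. -/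
/-!
Everything decouples. The `m`-part of the objective is minimised only at `m' = m`, and the
off-diagonal entries of `C'` only enter through `(Cᵢⱼ - C'ᵢⱼ)²`. For a lower-triangular `C'` with
positive diagonal, `h(m', C') = -∑ᵢ log C'ᵢᵢ`, so each diagonal entry solves the scalar problem
`min_{y > 0} -log y + (c - y)² / (2γ)`, whose solution `x` is the positive root of
`x² = c x + γ`. Convexity of `-log` gives the strong three-point inequality
`-log x + ((c - x)² + (y - x)²) / (2γ) ≤ -log y + (c - y)² / (2γ)`, which yields both
minimality and uniqueness.
-/

open Classical in
/-- The negative entropy on `ℝ^d × 𝒯^d`: `h(m, C) = −log det C` if all diagonal entries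
of the lower-triangular matrix `C` are positive, and `+∞` otherwise. -/
noncomputable def negEntropyTri {d : ℕ} (C : Matrix (Fin d) (Fin d) ℝ) : EReal :=
  if ∀ i, 0 < C i i then ((-Real.log C.det : ℝ) : EReal) else ⊤

open Finset

noncomputable def proxNegLog (γ c : ℝ) : ℝ := (c + √(c ^ 2 + 4 * γ)) / 2

section proxNegLog

variable {γ : ℝ}

theorem proxNegLog_pos (hγ : 0 < γ) (c : ℝ) : 0 < proxNegLog γ c := by
  have habs : |c| < √(c ^ 2 + 4 * γ) := by
    rw [← Real.sqrt_sq_eq_abs]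
    exact Real.sqrt_lt_sqrt (sq_nonneg c) (by linarith)
  unfold proxNegLog
  linarith [neg_abs_le c]

theorem proxNegLog_sq (hγ : 0 ≤ γ) (c : ℝ) :
    proxNegLog γ c ^ 2 = c * proxNegLog γ c + γ := by
  have hs : √(c ^ 2 + 4 * γ) ^ 2 = c ^ 2 + 4 * γ := Real.sq_sqrt (by positivity)
  unfold proxNegLog
  linear_combination hs / 4

theorem neg_log_proxNegLog_add_le (hγ : 0 < γ) (c : ℝ) {y : ℝ} (hy : 0 < y) :
    -Real.log (proxNegLog γ c)
        + 1 / (2 * γ) * ((c - proxNegLog γ c) ^ 2 + (y - proxNegLog γ c) ^ 2)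
      ≤ -Real.log y + 1 / (2 * γ) * (c - y) ^ 2 := by
  set x := proxNegLog γ c
  have hx : 0 < x := proxNegLog_pos hγ c
  have hlog : Real.log y - Real.log x ≤ (y - x) / x := by
    rw [← Real.log_div hy.ne' hx.ne', sub_div, div_self hx.ne']
    exact Real.log_le_sub_one_of_pos (div_pos hy hx)
  -- `x - c = γ / x` turns the quadratic defect into the first-order term of `log` at `x`.
  have hdefect : 1 / (2 * γ) * ((c - y) ^ 2 - (c - x) ^ 2 - (y - x) ^ 2) = (y - x) / x := by
    field_simp
    linear_combination 2 * (y - x) * proxNegLog_sq hγ.le c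
  linarith

end proxNegLog

section SumSq

variable {ι : Type*} [Fintype ι]

theorem eq_of_sum_sq_sub_eq_zero {f g : ι → ℝ} (h : ∑ i, (f i - g i) ^ 2 = 0) : f = g := by
  funext i
  have hi := (sum_eq_zero_iff_of_nonneg fun i _ => sq_nonneg (f i - g i)).mp h i (mem_univ i)
  exact sub_eq_zero.mp (pow_eq_zero_iff two_ne_zero |>.mp hi)

theorem Matrix.eq_of_sum_sq_sub_eq_zero {A B : Matrix ι ι ℝ}
    (h : ∑ i, ∑ j, (A i j - B i j) ^ 2 = 0) : A = B := by
  rw [← Fintype.sum_prod_type' fun i j => (A i j - B i j) ^ 2] at h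
  have hAB := _root_.eq_of_sum_sq_sub_eq_zero (f := fun p : ι × ι => A p.1 p.2) h
  exact Matrix.ext fun i j => congrFun hAB (i, j)

theorem Matrix.sum_sq_sub_three_point_eq_diag [DecidableEq ι] {A B X : Matrix ι ι ℝ}
    (hX : ∀ i j, i ≠ j → X i j = A i j) :
    ∑ i, ∑ j, (A i j - X i j) ^ 2 + ∑ i, ∑ j, (B i j - X i j) ^ 2
        - ∑ i, ∑ j, (A i j - B i j) ^ 2
      = ∑ i, ((A i i - X i i) ^ 2 + (B i i - X i i) ^ 2 - (A i i - B i i) ^ 2) := by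
  simp only [← sum_add_distrib, ← sum_sub_distrib]
  refine sum_congr rfl fun i _ => sum_eq_single i (fun j _ hji => ?_) (by simp)
  rw [hX i j hji.symm]
  ring

end SumSq

theorem negEntropyTri_of_pos {d : ℕ} {M : Matrix (Fin d) (Fin d) ℝ}
    (hM : ∀ i j, i < j → M i j = 0) (hpos : ∀ i, 0 < M i i) :
    negEntropyTri M = ((-∑ i, Real.log (M i i) : ℝ) : EReal) := by
  rw [negEntropyTri, if_pos hpos,
    Matrix.det_of_isLowerTriangular M fun i j h => hM i j h,
    Real.log_prod fun i _ => (hpos i).ne']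

theorem negEntropyTri_of_not_pos {d : ℕ} {M : Matrix (Fin d) (Fin d) ℝ}
    (hpos : ¬ ∀ i, 0 < M i i) : negEntropyTri M = ⊤ := by
  rw [negEntropyTri, if_neg hpos]

theorem sum_neg_log_proxNegLog_add_le {ι : Type*} [Fintype ι] [DecidableEq ι] {γ : ℝ}
    (hγ : 0 < γ) {C X Y : Matrix ι ι ℝ}
    (hX : ∀ i j, X i j = if i = j then proxNegLog γ (C i j) else C i j)
    (hY : ∀ i, 0 < Y i i) :
    -∑ i, Real.log (X i i) + 1 / (2 * γ) * ∑ i, ∑ j, (C i j - X i j) ^ 2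
        + 1 / (2 * γ) * ∑ i, ∑ j, (Y i j - X i j) ^ 2
      ≤ -∑ i, Real.log (Y i i) + 1 / (2 * γ) * ∑ i, ∑ j, (C i j - Y i j) ^ 2 := by
  have hdiag : ∀ i, X i i = proxNegLog γ (C i i) := fun i => by simp [hX]
  have hoff : ∀ i j, i ≠ j → X i j = C i j := fun i j hij => by simp [hX, hij]
  have hrow : ∀ i ∈ univ,
      -Real.log (X i i) + 1 / (2 * γ) * ((C i i - X i i) ^ 2 + (Y i i - X i i) ^ 2
          - (C i i - Y i i) ^ 2)
        ≤ -Real.log (Y i i) := fun i _ => by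
    have := neg_log_proxNegLog_add_le hγ (C i i) (hY i)
    rw [← hdiag i] at this
    linarith
  have hsum := sum_le_sum hrow
  rw [sum_add_distrib, ← mul_sum, ← Matrix.sum_sq_sub_three_point_eq_diag hoff,
    sum_neg_distrib, sum_neg_distrib] at hsum
  linarith

/-- **Proximal operator of the negative entropy over lower-triangular factors.**
For `h(m, C) = −log det C` (if `C` has positive diagonal, `+∞` otherwise) on
`ℝ^d × 𝒯^d` with the Euclidean/Frobenius inner products, `prox_{γh}(m, C) = (m, Ĉ)`,
where `Ĉᵢᵢ = (Cᵢᵢ + √(Cᵢᵢ² + 4γ))/2` and `Ĉᵢⱼ = Cᵢⱼ` for `i ≠ j`: the pair `(m, Ĉ)` is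
the unique minimizer of `v ↦ h(v) + (1/(2γ))‖(m, C) − v‖²` over `ℝ^d × 𝒯^d`. -/
theorem prox_negEntropy_lowerTriangular
    (d : ℕ) (γ : ℝ) (hγ : 0 < γ)
    (m : Fin d → ℝ) (C : Matrix (Fin d) (Fin d) ℝ)
    -- `C` is lower triangular
    (hC : ∀ i j : Fin d, i < j → C i j = 0)
    -- `Ĉ`
    (Chat : Matrix (Fin d) (Fin d) ℝ)
    (hChat : ∀ i j : Fin d,
      Chat i j = if i = j then (C i j + Real.sqrt ((C i j) ^ 2 + 4 * γ)) / 2 else C i j) :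
    -- `Ĉ` is lower triangular, i.e. `(m, Ĉ) ∈ ℝ^d × 𝒯^d`
    (∀ i j : Fin d, i < j → Chat i j = 0)
    -- `(m, Ĉ)` minimizes `v ↦ h(v) + (1/(2γ))‖(m, C) − v‖²` over `ℝ^d × 𝒯^d` ...
    ∧ (∀ (m' : Fin d → ℝ) (C' : Matrix (Fin d) (Fin d) ℝ),
        (∀ i j : Fin d, i < j → C' i j = 0) →
        negEntropyTri Chat
            + ((1 / (2 * γ) * ∑ i, ∑ j, (C i j - Chat i j) ^ 2 : ℝ) : EReal)
          ≤ negEntropyTri C'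
            + ((1 / (2 * γ) * ((∑ i, (m i - m' i) ^ 2)
                + ∑ i, ∑ j, (C i j - C' i j) ^ 2) : ℝ) : EReal))
    -- ... and it is the unique such minimizer
    ∧ (∀ (m' : Fin d → ℝ) (C' : Matrix (Fin d) (Fin d) ℝ),
        (∀ i j : Fin d, i < j → C' i j = 0) →
        negEntropyTri C'
            + ((1 / (2 * γ) * ((∑ i, (m i - m' i) ^ 2)
                + ∑ i, ∑ j, (C i j - C' i j) ^ 2) : ℝ) : EReal)
          ≤ negEntropyTri Chat
            + ((1 / (2 * γ) * ∑ i, ∑ j, (C i j - Chat i j) ^ 2 : ℝ) : EReal) →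
        m' = m ∧ C' = Chat) := by
  have hChat_lower : ∀ i j, i < j → Chat i j = 0 := fun i j hij => by
    rw [hChat, if_neg hij.ne, hC i j hij]
  have hChat_pos : ∀ i, 0 < Chat i i := fun i => by
    rw [hChat, if_pos rfl]
    exact proxNegLog_pos hγ (C i i)
  refine ⟨hChat_lower, fun m' C' hC' => ?_, fun m' C' hC' hle => ?_⟩
  · by_cases hpos : ∀ i, 0 < C' i i
    · have key := sum_neg_log_proxNegLog_add_le hγ hChat hpos
      rw [negEntropyTri_of_pos hChat_lower hChat_pos, negEntropyTri_of_pos hC' hpos,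
        ← EReal.coe_add, ← EReal.coe_add, EReal.coe_le_coe_iff]
      have hm : 0 ≤ 1 / (2 * γ) * ∑ i, (m i - m' i) ^ 2 := by positivity
      have hChat' : 0 ≤ 1 / (2 * γ) * ∑ i, ∑ j, (C' i j - Chat i j) ^ 2 := by positivity
      linarith [mul_add (1 / (2 * γ)) (∑ i, (m i - m' i) ^ 2) (∑ i, ∑ j, (C i j - C' i j) ^ 2)]
    · rw [negEntropyTri_of_not_pos hpos, EReal.top_add_coe]
      exact le_top
  · have hpos : ∀ i, 0 < C' i i := by
      by_contra hpos
      rw [negEntropyTri_of_not_pos hpos, EReal.top_add_coe,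
        negEntropyTri_of_pos hChat_lower hChat_pos, ← EReal.coe_add] at hle
      exact (EReal.coe_lt_top _).not_ge hle
    have key := sum_neg_log_proxNegLog_add_le hγ hChat hpos
    rw [negEntropyTri_of_pos hChat_lower hChat_pos, negEntropyTri_of_pos hC' hpos,
      ← EReal.coe_add, ← EReal.coe_add, EReal.coe_le_coe_iff] at hle
    have hm : 0 ≤ ∑ i, (m i - m' i) ^ 2 := by positivity
    have hChat' : 0 ≤ ∑ i, ∑ j, (C' i j - Chat i j) ^ 2 := by positivity
    have hc : 0 < 1 / (2 * γ) := by positivity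
    have hzero : ∑ i, (m i - m' i) ^ 2 + ∑ i, ∑ j, (C' i j - Chat i j) ^ 2 ≤ 0 :=
      nonpos_of_mul_nonpos_right (by linarith) hc
    exact ⟨(eq_of_sum_sq_sub_eq_zero (by linarith)).symm,
      Matrix.eq_of_sum_sq_sub_eq_zero (by linarith)⟩
end
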